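/- arXiv:2311.18670 — 6 statements merged into one kernel-verified Lean document; each statement's English description precedes it below -/
import Mathlib

section
/- Let X be an n×n real positive semidefinite matrix with all diagonal entries equal to d > 0. Then 0 ≤ n·d² − (1/n)·‖X‖_F² ≤ 2d·(n·d − (1/n)·⟨X, J⟩), where J is the n×n all-ones matrix and ⟨·,·⟩ is the trace inner product. -/
theorem psd_quad_aux (n : ℕ) (X : Matrix (Fin n) (Fin n) ℝ) (hX : X.PosSemidef)
    (i j : Fin n) (c : ℝ) :
    0 ≤ X i i + c * X i j + c * X j i + c ^ 2 * X j j := by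
  have h := hX.dotProduct_mulVec_nonneg (fun k => (if k = i then 1 else 0) + (if k = j then c else 0))
  simp only [star_trivial, dotProduct, Matrix.mulVec, mul_add, add_mul,
    Finset.sum_add_distrib, mul_ite, ite_mul, mul_one, mul_zero, zero_mul, one_mul,
    Finset.sum_ite_eq', Finset.mem_univ, if_true] at h
  ring_nf at h ⊢
  linarith [h]

/-- For an n×n real PSD matrix `X` with diagonal entries all equal to `d > 0`,
`0 ≤ n d² − n⁻¹ ‖X‖_F² ≤ 2d (n d − n⁻¹ ⟨X, J⟩)`. -/
theorem psd_frobenius_inner_ineq (n : ℕ) (hn : 0 < n) (d : ℝ) (hd : 0 < d)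
    (X : Matrix (Fin n) (Fin n) ℝ) (hX : X.PosSemidef)
    (hdiag : ∀ i, X i i = d) :
    0 ≤ (n : ℝ) * d ^ 2 - (n : ℝ)⁻¹ * (∑ i, ∑ j, (X i j) ^ 2) ∧
      (n : ℝ) * d ^ 2 - (n : ℝ)⁻¹ * (∑ i, ∑ j, (X i j) ^ 2) ≤
        2 * d * ((n : ℝ) * d - (n : ℝ)⁻¹ * (∑ i, ∑ j, X i j)) := by
  have hsym : ∀ i j, X j i = X i j := fun i j => by
    have := hX.1.apply i j
    simpa using this
  have habs : ∀ i j, (X i j) ^ 2 ≤ d ^ 2 := by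
    intro i j
    have h1 := psd_quad_aux n X hX i j 1
    have h2 := psd_quad_aux n X hX i j (-1)
    rw [hdiag i, hdiag j, hsym i j] at h1 h2
    nlinarith [sq_nonneg (d - X i j), sq_nonneg (d + X i j)]
  have hsq : ∀ i j, 2 * d * X i j - (X i j) ^ 2 ≤ d ^ 2 := by
    intro i j; nlinarith [sq_nonneg (d - X i j)]
  have hnpos : (0 : ℝ) < n := by exact_mod_cast hn
  have hninv : (0 : ℝ) < (n : ℝ)⁻¹ := by positivity
  have hS2 : (∑ i, ∑ j, (X i j) ^ 2) ≤ (n : ℝ) * ((n : ℝ) * d ^ 2) := by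
    calc (∑ i, ∑ j, (X i j) ^ 2) ≤ ∑ i : Fin n, ∑ _j : Fin n, d ^ 2 := by
          apply Finset.sum_le_sum; intro i _; exact Finset.sum_le_sum fun j _ => habs i j
      _ = (n : ℝ) * ((n : ℝ) * d ^ 2) := by simp [Finset.sum_const, mul_comm]
  have hS1 : (∑ i, ∑ j, (2 * d * X i j - (X i j) ^ 2)) ≤ (n : ℝ) * ((n : ℝ) * d ^ 2) := by
    calc (∑ i, ∑ j, (2 * d * X i j - (X i j) ^ 2)) ≤ ∑ i : Fin n, ∑ _j : Fin n, d ^ 2 := by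
          apply Finset.sum_le_sum; intro i _; exact Finset.sum_le_sum fun j _ => hsq i j
      _ = (n : ℝ) * ((n : ℝ) * d ^ 2) := by simp [Finset.sum_const, mul_comm]
  have hsplit : (∑ i, ∑ j, (2 * d * X i j - (X i j) ^ 2))
      = 2 * d * (∑ i, ∑ j, X i j) - (∑ i, ∑ j, (X i j) ^ 2) := by
    simp [Finset.sum_sub_distrib, Finset.mul_sum]
  rw [hsplit] at hS1
  constructor
  · have := mul_le_mul_of_nonneg_left hS2 hninv.le
    rw [← mul_assoc, inv_mul_cancel₀ hnpos.ne', one_mul] at this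
    linarith
  · have := mul_le_mul_of_nonneg_left hS1 hninv.le
    rw [← mul_assoc, inv_mul_cancel₀ hnpos.ne', one_mul] at this
    rw [mul_sub, ← mul_assoc] at this
    ring_nf at this ⊢
    linarith
end

section
/- Let X and Y be n×n real positive semidefinite matrices and let Π be the orthogonal projection onto a d-dimensional subspace contained in the null space of X such that YΠ = 0. Then ⟨X, Y⟩ ≥ λ_{d+1}(X) · Tr((I − Π)Y), where λ_{d+1}(X) is the (d+1)-th smallest eigenvalue of X. -/
/-- The eigenvalues of a Hermitian matrix sorted in increasing order:
`sortedEigenvalues hA k` is the `(k+1)`-th smallest eigenvalue of `A`. -/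
noncomputable def sortedEigenvalues {n : ℕ} {A : Matrix (Fin n) (Fin n) ℝ}
    (hA : A.IsHermitian) : Fin n → ℝ :=
  hA.eigenvalues ∘ Tuple.sort hA.eigenvalues

open Matrix Finset in
/-- If `X, Y` are PSD, `Π` is an orthogonal projection of rank `d` whose range is
contained in the null space of `X` and `Y Π = 0`, then
`⟨X, Y⟩ ≥ λ_{d+1}(X) · Tr((I − Π) Y)`. -/
theorem psd_inner_ge_eigenvalue_trace (n d : ℕ) (hdn : d < n)
    (X Y P : Matrix (Fin n) (Fin n) ℝ)
    (hX : X.PosSemidef) (hY : Y.PosSemidef)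
    (hPsymm : P.IsSymm) (hPproj : P * P = P) (hPrank : P.rank = d)
    (hXP : X * P = 0) (hYP : Y * P = 0) :
    (X * Y).trace ≥
      sortedEigenvalues hX.isHermitian ⟨d, hdn⟩ * ((1 - P) * Y).trace := by
  classical
  set hH := hX.isHermitian with hHdef
  set V : Matrix (Fin n) (Fin n) ℝ := (hH.eigenvectorUnitary : Matrix (Fin n) (Fin n) ℝ)
    with hVdef
  set ev : Fin n → ℝ := hH.eigenvalues with hevdef
  set lam : ℝ := sortedEigenvalues hH ⟨d, hdn⟩ with hlamdef
  set u : Fin n → Fin n → ℝ := fun j => ⇑(hH.eigenvectorBasis j) with hudef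
  have hVu : ∀ i j, V i j = u j i := fun i j => hH.eigenvectorUnitary_apply i j
  set y : Fin n → ℝ := fun j => u j ⬝ᵥ (Y *ᵥ u j) with hydef
  have hVV : V * star V = 1 := Matrix.mem_unitaryGroup_iff.mp hH.eigenvectorUnitary.2
  have hMjj : ∀ j, (star V * Y * V) j j = y j := by
    intro j
    simp only [Matrix.mul_apply, hydef, dotProduct, Matrix.mulVec, star_apply, star_trivial,
      Finset.sum_mul, Finset.mul_sum]
    rw [Finset.sum_comm]
    refine Finset.sum_congr rfl fun k _ => Finset.sum_congr rfl fun l _ => ?_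
    rw [hVu, hVu]; ring
  have hspec : X = V * Matrix.diagonal ev * star V := by
    simpa using hH.spectral_theorem
  have h1 : (X * Y).trace = ∑ j, ev j * y j := by
    calc (X * Y).trace = (V * Matrix.diagonal ev * star V * Y).trace := by rw [← hspec]
      _ = (Matrix.diagonal ev * (star V * Y * V)).trace := by
          rw [Matrix.mul_assoc (V * Matrix.diagonal ev), Matrix.trace_mul_comm,
            ← Matrix.mul_assoc, ← Matrix.mul_assoc, Matrix.trace_mul_comm, ← Matrix.mul_assoc]
      _ = ∑ j, ev j * y j := by
          simp only [Matrix.trace, Matrix.diag, Matrix.diagonal_mul]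
          exact Finset.sum_congr rfl fun j _ => by rw [hMjj]
  have hPY : P * Y = 0 := by
    have hYsymm : Yᵀ = Y := by
      rw [← Y.conjTranspose_eq_transpose_of_trivial, hY.isHermitian.eq]
    have h := congrArg Matrix.transpose hYP
    rwa [Matrix.transpose_mul, hPsymm.eq, hYsymm, Matrix.transpose_zero] at h
  have h2 : ((1 - P) * Y).trace = ∑ j, y j := by
    rw [Matrix.sub_mul, Matrix.one_mul, hPY, sub_zero]
    calc Y.trace = (star V * Y * V).trace := by
          rw [Matrix.trace_mul_cycle (star V) Y V, hVV, Matrix.one_mul]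
      _ = ∑ j, y j := by
          simp only [Matrix.trace, Matrix.diag]
          exact Finset.sum_congr rfl fun j _ => hMjj j
  have hy0 : ∀ j, 0 ≤ y j := by
    intro j
    have := hY.dotProduct_mulVec_nonneg (u j)
    simpa [hydef] using this
  -- key: small eigenvalues have y = 0
  have hrange_le : LinearMap.range P.mulVecLin ≤ LinearMap.ker X.mulVecLin := by
    rintro v ⟨w, rfl⟩
    simp only [LinearMap.mem_ker, Matrix.mulVecLin_apply, ← Matrix.mulVec_mulVec, hXP]
    simp [Matrix.mulVec_mulVec, hXP]
  have hrankP : Module.finrank ℝ (LinearMap.range P.mulVecLin) = d := hPrank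
  have hrn : X.rank + Module.finrank ℝ (LinearMap.ker X.mulVecLin) = n := by
    have := LinearMap.finrank_range_add_finrank_ker X.mulVecLin
    simpa [Matrix.rank] using this
  have hkerP_le : d ≤ Module.finrank ℝ (LinearMap.ker X.mulVecLin) := by
    rw [← hrankP]; exact Submodule.finrank_mono hrange_le
  have hrank_card : X.rank = (Finset.univ.filter (fun i => ev i ≠ 0)).card := by
    rw [hH.rank_eq_card_non_zero_eigs, Fintype.card_subtype]
  have hkey : ∀ j, ev j < lam → y j = 0 := by
    intro j hj
    have hlam_pos : 0 < lam := lt_of_le_of_lt (hX.eigenvalues_nonneg j) hj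
    -- card of small-eigenvalue set is at most d
    have hcard : (Finset.univ.filter (fun i => ev i < lam)).card ≤ d := by
      set σ := Tuple.sort ev with hσ
      have hlam' : lam = ev (σ ⟨d, hdn⟩) := rfl
      have himg : (Finset.univ.filter (fun i => ev i < lam)) =
          Finset.image σ (Finset.univ.filter (fun i => ev (σ i) < lam)) := by
        ext i
        simp only [Finset.mem_filter, Finset.mem_univ, true_and, Finset.mem_image]
        constructor
        · intro hi; exact ⟨σ.symm i, by simpa using hi, by simp⟩
        · rintro ⟨a, ha, rfl⟩; exact ha
      rw [himg, Finset.card_image_of_injective _ σ.injective]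
      have hsub : (Finset.univ.filter (fun i => ev (σ i) < lam)) ⊆ Finset.Iio ⟨d, hdn⟩ := by
        intro i hi
        simp only [Finset.mem_filter, Finset.mem_univ, true_and] at hi
        rw [Finset.mem_Iio]
        by_contra hle
        push_neg at hle
        exact absurd (Tuple.monotone_sort ev hle) (by rw [hlam'] at hi; exact not_le.mpr hi)
      calc _ ≤ (Finset.Iio (⟨d, hdn⟩ : Fin n)).card := Finset.card_le_card hsub
        _ = d := by simpa using Fin.card_Iio (⟨d, hdn⟩ : Fin n)
    have hcard_not : n - d ≤ (Finset.univ.filter (fun i => ¬ ev i < lam)).card := by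
      have := Finset.card_filter_add_card_filter_not
        (s := (Finset.univ : Finset (Fin n))) (p := fun i => ev i < lam)
      have hcu : (Finset.univ : Finset (Fin n)).card = n := by simp
      omega
    have hsubne : (Finset.univ.filter (fun i => ¬ ev i < lam)) ⊆
        (Finset.univ.filter (fun i => ev i ≠ 0)) := by
      intro i hi
      simp only [Finset.mem_filter, Finset.mem_univ, true_and, not_lt] at hi ⊢
      exact ne_of_gt (lt_of_lt_of_le hlam_pos hi)
    -- ev j = 0
    have hevj : ev j = 0 := by
      by_contra hne
      have hjmem : j ∈ insert j (Finset.univ.filter (fun i => ¬ ev i < lam)) :=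
        Finset.mem_insert_self _ _
      have hins : insert j (Finset.univ.filter (fun i => ¬ ev i < lam)) ⊆
          (Finset.univ.filter (fun i => ev i ≠ 0)) := by
        intro i hi
        rcases Finset.mem_insert.mp hi with rfl | hi
        · simp [hne]
        · exact hsubne hi
      have hjn : j ∉ (Finset.univ.filter (fun i => ¬ ev i < lam)) := by
        simp [hj]
      have hk := Finset.card_le_card hins
      rw [Finset.card_insert_of_notMem hjn] at hk
      rw [← hrank_card] at hk
      omega
    -- range P = ker X
    have hker_le : Module.finrank ℝ (LinearMap.ker X.mulVecLin) ≤ d := by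
      have hrk : n - d ≤ X.rank := by
        rw [hrank_card]
        exact le_trans hcard_not (Finset.card_le_card hsubne)
      omega
    have hrange_eq : LinearMap.range P.mulVecLin = LinearMap.ker X.mulVecLin :=
      Submodule.eq_of_le_of_finrank_le hrange_le (by rw [hrankP]; exact hker_le)
    have huker : u j ∈ LinearMap.ker X.mulVecLin := by
      rw [LinearMap.mem_ker, Matrix.mulVecLin_apply]
      rw [show X *ᵥ u j = ev j • u j from hH.mulVec_eigenvectorBasis j, hevj, zero_smul]
    rw [← hrange_eq] at huker
    obtain ⟨w, hw⟩ := huker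
    have hYu : Y *ᵥ u j = 0 := by
      rw [← hw]
      simp only [Matrix.mulVecLin_apply, Matrix.mulVec_mulVec, hYP, Matrix.zero_mulVec]
    simp [hydef, hYu]
  -- conclude
  have key : ∀ j ∈ Finset.univ, lam * y j ≤ ev j * y j := by
    intro j _
    rcases le_or_gt lam (ev j) with h | h
    · exact mul_le_mul_of_nonneg_right h (hy0 j)
    · rw [hkey j h]; simp
  rw [ge_iff_le, h2, Finset.mul_sum, h1]
  exact Finset.sum_le_sum key
end

section
/- Let S_i ∈ ℝ^{d×p} with S_i S_iᵀ = I_d, O_i ∈ O(d), and Φ a d×p matrix with i.i.d. standard Gaussian entries independent of everything else. Set Ṡ_i = O_i Φ − S_i Φᵀ O_iᵀ S_i. Then for any i, j: E[Ṡ_i Ṡ_jᵀ] = (p−2)·O_i O_jᵀ + ⟨O_iᵀ S_i, O_jᵀ S_j⟩ · S_i S_jᵀ. -/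
open MeasureTheory ProbabilityTheory
open Real
open scoped ENNReal NNReal

section GaussAux

lemma pdf_eq : gaussianPDFReal 0 1 = fun x => (Real.sqrt (2*π))⁻¹ * Real.exp (-(1/2) * x^2) := by
  funext x
  unfold gaussianPDFReal
  norm_num
  left
  ring_nf

lemma gauss_int (g : ℝ → ℝ) : ∫ x, g x ∂(gaussianReal 0 1) = ∫ x, gaussianPDFReal 0 1 x * g x := by
  rw [gaussianReal_of_var_ne_zero 0 one_ne_zero]
  rw [gaussianPDF_def]
  have h : ∀ x:ℝ, ENNReal.ofReal (gaussianPDFReal 0 1 x) = ((gaussianPDFReal 0 1 x).toNNReal : ℝ≥0∞) := fun x => rfl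
  simp_rw [h]
  rw [integral_withDensity_eq_integral_smul ((measurable_gaussianPDFReal 0 1).real_toNNReal) g]
  congr 1
  funext x
  rw [NNReal.smul_def, smul_eq_mul, Real.coe_toNNReal _ (gaussianPDFReal_nonneg 0 1 x)]

lemma odd_int : (∫ x:ℝ, x * rexp (-(1/2)*x^2)) = 0 := by
  have h : (∫ x:ℝ, x * rexp (-(1/2)*x^2)) = - ∫ x:ℝ, x * rexp (-(1/2)*x^2) := by
    nth_rewrite 1 [← Measure.map_neg_eq_self (volume : Measure ℝ)]
    rw [integral_map measurable_neg.aemeasurable (Continuous.aestronglyMeasurable (by fun_prop))]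
    rw [← integral_neg]
    congr 1; funext x; simp
  linarith

lemma sq_int : (∫ x:ℝ, x^2 * rexp (-(1/2)*x^2)) = Real.sqrt (2*π) := by
  have h1 : (∫ x:ℝ, x^2 * rexp (-(1/2)*x^2)) = ∫ x:ℝ, |x|^2 * rexp (-(1/2)*|x|^2) := by
    congr 1; funext x; rw [sq_abs]
  rw [h1, integral_comp_abs (f := fun t => t^2 * rexp (-(1/2)*t^2))]
  have h2 : (∫ x in Set.Ioi (0:ℝ), x^2 * rexp (-(1/2)*x^2)) =
      ∫ x in Set.Ioi (0:ℝ), x ^ (2:ℝ) * rexp (-(1/2) * x ^ (2:ℝ)) := by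
    refine setIntegral_congr_fun measurableSet_Ioi (fun x hx => ?_)
    rw [show ((2:ℝ)) = ((2:ℕ):ℝ) by norm_num, rpow_natCast]
  rw [h2, integral_rpow_mul_exp_neg_mul_rpow (by norm_num) (by norm_num) (by norm_num)]
  rw [show ((2:ℝ)+1)/2 = 1/2 + 1 by norm_num, Real.Gamma_add_one (by norm_num), Real.Gamma_one_half_eq]
  rw [show (-((2:ℝ)+1)/2) = -(3/2) by norm_num]
  rw [Real.rpow_neg (by norm_num), show ((1:ℝ)/2) = 2⁻¹ by norm_num, Real.inv_rpow (by norm_num), inv_inv]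
  rw [show ((3:ℝ)/2) = 1 + 2⁻¹ by norm_num, Real.rpow_add (by norm_num), Real.rpow_one]
  rw [show ((2:ℝ)^(2⁻¹:ℝ)) = Real.sqrt 2 by rw [Real.sqrt_eq_rpow]; norm_num]
  rw [Real.sqrt_mul (by norm_num)]
  ring

lemma sqrt2pi_ne : Real.sqrt (2*π) ≠ 0 := by positivity

lemma gauss_m1 : ∫ x, x ∂(gaussianReal 0 1) = 0 := by
  rw [gauss_int (fun x => x), pdf_eq]
  have : (∫ x:ℝ, (Real.sqrt (2*π))⁻¹ * rexp (-(1/2) * x^2) * x)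
      = (Real.sqrt (2*π))⁻¹ * ∫ x:ℝ, x * rexp (-(1/2) * x^2) := by
    rw [← integral_const_mul]; congr 1; funext x; ring
  rw [this, odd_int, mul_zero]

lemma gauss_m2 : ∫ x, x * x ∂(gaussianReal 0 1) = 1 := by
  rw [gauss_int (fun x => x * x), pdf_eq]
  have : (∫ x:ℝ, (Real.sqrt (2*π))⁻¹ * rexp (-(1/2) * x^2) * (x * x))
      = (Real.sqrt (2*π))⁻¹ * ∫ x:ℝ, x^2 * rexp (-(1/2) * x^2) := by
    rw [← integral_const_mul]; congr 1; funext x; ring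
  rw [this, sq_int, inv_mul_cancel₀ sqrt2pi_ne]

lemma int_sq_exp : Integrable (fun x:ℝ => x^2 * rexp (-(1/2)*x^2)) := by
  refine Integrable.mono' ((integrable_exp_neg_mul_sq (by norm_num : (0:ℝ) < 1/4)).const_mul 4)
    (Continuous.aestronglyMeasurable (by fun_prop)) (Filter.Eventually.of_forall (fun x => ?_))
  rw [Real.norm_eq_abs, abs_of_nonneg (by positivity)]
  have h1 : x^2 ≤ 4 * rexp ((1/4)*x^2) := by
    have := Real.add_one_le_exp ((1/4)*x^2)
    nlinarith [Real.exp_pos ((1/4)*x^2)]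
  calc x^2 * rexp (-(1/2)*x^2) ≤ 4 * rexp ((1/4)*x^2) * rexp (-(1/2)*x^2) := by
        have := Real.exp_pos (-(1/2)*x^2); nlinarith
    _ = 4 * rexp (-(1/4) * x^2) := by rw [mul_assoc, ← Real.exp_add]; ring_nf

lemma gauss_int1 : Integrable (fun x:ℝ => x) (gaussianReal 0 1) := by
  rw [gaussianReal_of_var_ne_zero 0 one_ne_zero, gaussianPDF_def]
  have h : ∀ x:ℝ, ENNReal.ofReal (gaussianPDFReal 0 1 x) = ((gaussianPDFReal 0 1 x).toNNReal : ℝ≥0∞) := fun x => rfl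
  simp_rw [h]
  rw [integrable_withDensity_iff_integrable_smul ((measurable_gaussianPDFReal 0 1).real_toNNReal)]
  have : (fun x:ℝ => (gaussianPDFReal 0 1 x).toNNReal • x)
      = fun x:ℝ => (Real.sqrt (2*π))⁻¹ * (x * rexp (-(1/2)*x^2)) := by
    funext x
    rw [NNReal.smul_def, smul_eq_mul, Real.coe_toNNReal _ (gaussianPDFReal_nonneg 0 1 x), pdf_eq]
    ring
  rw [this]
  exact (integrable_mul_exp_neg_mul_sq (by norm_num : (0:ℝ) < 1/2)).const_mul _

lemma gauss_int2 : Integrable (fun x:ℝ => x * x) (gaussianReal 0 1) := by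
  rw [gaussianReal_of_var_ne_zero 0 one_ne_zero, gaussianPDF_def]
  have h : ∀ x:ℝ, ENNReal.ofReal (gaussianPDFReal 0 1 x) = ((gaussianPDFReal 0 1 x).toNNReal : ℝ≥0∞) := fun x => rfl
  simp_rw [h]
  rw [integrable_withDensity_iff_integrable_smul ((measurable_gaussianPDFReal 0 1).real_toNNReal)]
  have : (fun x:ℝ => (gaussianPDFReal 0 1 x).toNNReal • (x * x))
      = fun x:ℝ => (Real.sqrt (2*π))⁻¹ * (x^2 * rexp (-(1/2)*x^2)) := by
    funext x
    rw [NNReal.smul_def, smul_eq_mul, Real.coe_toNNReal _ (gaussianPDFReal_nonneg 0 1 x), pdf_eq]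
    ring
  rw [this]
  exact int_sq_exp.const_mul _

section pi
variable {ι : Type*} [Fintype ι] [DecidableEq ι]

lemma pi_gauss_integrable (k l : ι) :
    Integrable (fun ω : ι → ℝ => ω k * ω l) (Measure.pi fun _ : ι => gaussianReal 0 1) := by
  letI : MeasureSpace ℝ := { volume := gaussianReal 0 1 }
  haveI : SigmaFinite (volume : Measure ℝ) := by
    show SigmaFinite (gaussianReal 0 1); infer_instance
  have key : Integrable (fun ω : ι → ℝ =>
      ∏ i, ((if i = k then ω i else 1) * (if i = l then ω i else 1))) := by
    apply Integrable.fintype_prod (f := fun i x => (if i = k then x else 1) * (if i = l then x else 1))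
    intro i
    show Integrable _ (gaussianReal 0 1)
    rcases eq_or_ne i k with hik | hik <;> rcases eq_or_ne i l with hil | hil
    · have hkl : k = l := hik.symm.trans hil
      simp [hik, hkl, gauss_int2]
    · have hkl : k ≠ l := fun h => hil (hik.trans h)
      simp [hik, hkl, gauss_int1]
    · have hkl : l ≠ k := fun h => hik (hil.trans h)
      simp [hil, hkl, gauss_int1]
    · simp [hik, hil]
  have : (fun ω : ι → ℝ => ∏ i, ((if i = k then ω i else 1) * (if i = l then ω i else 1)))
      = fun ω : ι → ℝ => ω k * ω l := by
    funext ω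
    rw [Finset.prod_mul_distrib]
    simp [Finset.prod_ite_eq']
  rwa [this] at key

lemma pi_gauss_integral (k l : ι) :
    (∫ ω : ι → ℝ, ω k * ω l ∂(Measure.pi fun _ : ι => gaussianReal 0 1))
      = if k = l then 1 else 0 := by
  letI : MeasureSpace ℝ := { volume := gaussianReal 0 1 }
  haveI hsf : SigmaFinite (volume : Measure ℝ) := by
    show SigmaFinite (gaussianReal 0 1); infer_instance
  haveI hpm : IsProbabilityMeasure (volume : Measure ℝ) := by
    show IsProbabilityMeasure (gaussianReal 0 1); infer_instance
  have key := integral_fintype_prod_eq_prod (𝕜 := ℝ) (μ := fun _ : ι => gaussianReal 0 1)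
    (f := fun (i : ι) (x : ℝ) => (if i = k then x else 1) * (if i = l then x else 1))
  have hint : ∀ ω : ι → ℝ, (∏ i, ((if i = k then ω i else 1) * (if i = l then ω i else 1)))
      = ω k * ω l := by
    intro ω
    rw [Finset.prod_mul_distrib]
    simp [Finset.prod_ite_eq']
  simp_rw [hint] at key
  have hval : ∀ i : ι, (∫ x : ℝ, (if i = k then x else 1) * (if i = l then x else 1) ∂(gaussianReal 0 1))
      = if i = k then (if k = l then 1 else 0) else (if i = l then 0 else 1) := by
    intro i
    rcases eq_or_ne i k with hik | hik <;> rcases eq_or_ne i l with hil | hil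
    · have hkl : k = l := hik.symm.trans hil
      simp only [if_pos hik, if_pos hil, if_pos hkl]
      simpa using gauss_m2
    · have hkl : k ≠ l := fun h => hil (hik.trans h)
      simp only [if_pos hik, if_neg hil, mul_one, if_neg hkl]
      simpa using gauss_m1
    · simp only [if_neg hik, if_pos hil, one_mul]
      simpa using gauss_m1
    · simp only [if_neg hik, if_neg hil, mul_one]
      simp
  rw [key]
  simp_rw [hval]
  by_cases hkl : k = l
  · subst hkl
    rw [if_pos rfl]
    apply Finset.prod_eq_one
    intro i _
    rcases eq_or_ne i k with hik | hik <;> simp [hik]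
  · rw [if_neg hkl]
    apply Finset.prod_eq_zero (Finset.mem_univ k)
    simp [hkl]
end pi

lemma integral_quadratic {ι : Type*} [Fintype ι] [DecidableEq ι] (C : ι → ι → ℝ) :
    (∫ ω : ι → ℝ, (∑ k, ∑ l, C k l * (ω k * ω l))
        ∂(Measure.pi fun _ : ι => gaussianReal 0 1)) = ∑ k, C k k := by
  rw [integral_finset_sum _ (fun k _ => integrable_finset_sum _
    (fun l _ => (pi_gauss_integrable k l).const_mul (C k l)))]
  have h : ∀ k : ι, (∫ ω : ι → ℝ, ∑ l, C k l * (ω k * ω l)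
      ∂(Measure.pi fun _ : ι => gaussianReal 0 1)) = ∑ l, C k l * (if k = l then 1 else 0) := by
    intro k
    rw [integral_finset_sum _ (fun l _ => (pi_gauss_integrable k l).const_mul (C k l))]
    refine Finset.sum_congr rfl (fun l _ => ?_)
    rw [integral_const_mul, pi_gauss_integral]
  simp_rw [h]
  refine Finset.sum_congr rfl (fun k _ => ?_)
  simp [mul_ite, Finset.sum_ite_eq]

end GaussAux

/-- For `S_i, S_j` on the Stiefel manifold, `O_i, O_j` orthogonal, and `Φ` a `d × p`
i.i.d. standard Gaussian matrix, with `Ṡ_i = O_i Φ − S_i Φᵀ O_iᵀ S_i`,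
`E[Ṡ_i Ṡ_jᵀ] = (p − 2) O_i O_jᵀ + ⟨O_iᵀ S_i, O_jᵀ S_j⟩ S_i S_jᵀ`. -/
theorem gaussian_expectation_tangent_product (d p : ℕ)
    (Si Sj : Matrix (Fin d) (Fin p) ℝ)
    (hSi : Si * Si.transpose = 1) (hSj : Sj * Sj.transpose = 1)
    (Oi Oj : Matrix (Fin d) (Fin d) ℝ)
    (hOi : Oi * Oi.transpose = 1) (hOi' : Oi.transpose * Oi = 1)
    (hOj : Oj * Oj.transpose = 1) (hOj' : Oj.transpose * Oj = 1) :
    ∀ a b : Fin d,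
      (∫ ω : Fin d × Fin p → ℝ,
          ((Oi * (Matrix.of fun c e => ω (c, e)) -
              Si * (Matrix.of fun c e => ω (c, e)).transpose * Oi.transpose * Si) *
            (Oj * (Matrix.of fun c e => ω (c, e)) -
              Sj * (Matrix.of fun c e => ω (c, e)).transpose * Oj.transpose *
                Sj).transpose) a b
          ∂(Measure.pi fun _ : Fin d × Fin p => gaussianReal 0 1)) =
        (((p : ℝ) - 2) • (Oi * Oj.transpose) +
          ((Oi.transpose * Si).transpose * (Oj.transpose * Sj)).trace •
            (Si * Sj.transpose)) a b := by
  intro a b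
  set P : Matrix (Fin d) (Fin p) ℝ := Oi.transpose * Si with hP
  set Q : Matrix (Fin d) (Fin p) ℝ := Oj.transpose * Sj with hQ
  set A : Fin d × Fin p → Fin p → ℝ :=
    fun k m => Oi a k.1 * (if k.2 = m then 1 else 0) - Si a k.2 * P k.1 m with hA
  set B : Fin d × Fin p → Fin p → ℝ :=
    fun k m => Oj b k.1 * (if k.2 = m then 1 else 0) - Sj b k.2 * Q k.1 m with hB
  set C : (Fin d × Fin p) → (Fin d × Fin p) → ℝ :=
    fun k l => ∑ m, A k m * B l m with hC
  -- Step 1: representation of the matrix entries as linear forms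
  have hXi : ∀ (ω : Fin d × Fin p → ℝ) (m : Fin p),
      (Oi * (Matrix.of fun c e => ω (c, e)) -
        Si * (Matrix.of fun c e => ω (c, e)).transpose * Oi.transpose * Si) a m
        = ∑ k, A k m * ω k := by
    intro ω m
    have assoc : Si * (Matrix.of fun c e => ω (c, e)).transpose * Oi.transpose * Si
        = Si * ((Matrix.of fun c e => ω (c, e)).transpose * (Oi.transpose * Si)) := by
      rw [Matrix.mul_assoc, Matrix.mul_assoc]
    rw [Matrix.sub_apply, assoc, Fintype.sum_prod_type]
    simp only [hA, sub_mul]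
    simp only [Finset.sum_sub_distrib]
    congr 1
    · rw [Matrix.mul_apply]
      refine Finset.sum_congr rfl (fun c _ => ?_)
      simp [ite_mul, mul_ite, Finset.sum_ite_eq']
    · rw [Matrix.mul_apply]
      rw [Finset.sum_comm]
      refine Finset.sum_congr rfl (fun e _ => ?_)
      rw [Matrix.mul_apply, Finset.mul_sum]
      refine Finset.sum_congr rfl (fun c _ => ?_)
      simp [Matrix.transpose_apply, hP]
      ring
  have hXj : ∀ (ω : Fin d × Fin p → ℝ) (m : Fin p),
      (Oj * (Matrix.of fun c e => ω (c, e)) -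
        Sj * (Matrix.of fun c e => ω (c, e)).transpose * Oj.transpose * Sj) b m
        = ∑ k, B k m * ω k := by
    intro ω m
    have assoc : Sj * (Matrix.of fun c e => ω (c, e)).transpose * Oj.transpose * Sj
        = Sj * ((Matrix.of fun c e => ω (c, e)).transpose * (Oj.transpose * Sj)) := by
      rw [Matrix.mul_assoc, Matrix.mul_assoc]
    rw [Matrix.sub_apply, assoc, Fintype.sum_prod_type]
    simp only [hB, sub_mul]
    simp only [Finset.sum_sub_distrib]
    congr 1
    · rw [Matrix.mul_apply]
      refine Finset.sum_congr rfl (fun c _ => ?_)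
      simp [ite_mul, mul_ite, Finset.sum_ite_eq']
    · rw [Matrix.mul_apply]
      rw [Finset.sum_comm]
      refine Finset.sum_congr rfl (fun e _ => ?_)
      rw [Matrix.mul_apply, Finset.mul_sum]
      refine Finset.sum_congr rfl (fun c _ => ?_)
      simp [Matrix.transpose_apply, hQ]
      ring
  have hrep : ∀ ω : Fin d × Fin p → ℝ,
      ((Oi * (Matrix.of fun c e => ω (c, e)) -
          Si * (Matrix.of fun c e => ω (c, e)).transpose * Oi.transpose * Si) *
        (Oj * (Matrix.of fun c e => ω (c, e)) -
          Sj * (Matrix.of fun c e => ω (c, e)).transpose * Oj.transpose *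
            Sj).transpose) a b = ∑ k, ∑ l, C k l * (ω k * ω l) := by
    intro ω
    rw [Matrix.mul_apply]
    simp only [Matrix.transpose_apply]
    calc ∑ m, (Oi * (Matrix.of fun c e => ω (c, e)) -
          Si * (Matrix.of fun c e => ω (c, e)).transpose * Oi.transpose * Si) a m *
          (Oj * (Matrix.of fun c e => ω (c, e)) -
          Sj * (Matrix.of fun c e => ω (c, e)).transpose * Oj.transpose * Sj) b m
        = ∑ m, (∑ k, A k m * ω k) * (∑ l, B l m * ω l) := by
          refine Finset.sum_congr rfl (fun m _ => ?_)
          rw [hXi ω m, hXj ω m]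
      _ = ∑ m, ∑ k, ∑ l, (A k m * ω k) * (B l m * ω l) := by
          refine Finset.sum_congr rfl (fun m _ => ?_)
          rw [Finset.sum_mul_sum]
      _ = ∑ k, ∑ m, ∑ l, (A k m * ω k) * (B l m * ω l) := Finset.sum_comm
      _ = ∑ k, ∑ l, ∑ m, (A k m * ω k) * (B l m * ω l) := by
          refine Finset.sum_congr rfl (fun k _ => ?_)
          exact Finset.sum_comm
      _ = ∑ k, ∑ l, C k l * (ω k * ω l) := by
          refine Finset.sum_congr rfl (fun k _ => Finset.sum_congr rfl (fun l _ => ?_))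
          rw [hC, Finset.sum_mul]
          exact Finset.sum_congr rfl (fun m _ => by ring)
  rw [integral_congr_ae (Filter.Eventually.of_forall (fun ω => hrep ω))]
  rw [integral_quadratic C]
  -- Step 2: the algebra
  have hSj' : ∀ x y : Fin d, (∑ e, Sj x e * Sj y e) = if x = y then 1 else 0 := by
    intro x y
    have h := congrFun (congrFun hSj x) y
    simpa [Matrix.mul_apply, Matrix.transpose_apply, Matrix.one_apply] using h
  have hQS : Sj * Q.transpose = Oj := by
    rw [hQ, Matrix.transpose_mul, Matrix.transpose_transpose, ← Matrix.mul_assoc, hSj,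
      Matrix.one_mul]
  have hPS : Si * P.transpose = Oi := by
    rw [hP, Matrix.transpose_mul, Matrix.transpose_transpose, ← Matrix.mul_assoc, hSi,
      Matrix.one_mul]
  have hQ' : ∀ c : Fin d, (∑ e, Sj b e * Q c e) = Oj b c := by
    intro c
    have h := congrFun (congrFun hQS b) c
    simpa [Matrix.mul_apply, Matrix.transpose_apply] using h
  have hP' : ∀ c : Fin d, (∑ e, Si a e * P c e) = Oi a c := by
    intro c
    have h := congrFun (congrFun hPS a) c
    simpa [Matrix.mul_apply, Matrix.transpose_apply] using h
  have expand : ∀ c : Fin d, ∀ e : Fin p,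
      (∑ m, ((Oi a c * if e = m then 1 else 0) - Si a e * P c m) *
        ((Oj b c * if e = m then 1 else 0) - Sj b e * Q c m))
      = Oi a c * Oj b c - Oi a c * (Sj b e * Q c e) - (Si a e * P c e) * Oj b c
        + (Si a e * Sj b e) * ∑ m, P c m * Q c m := by
    intro c e
    have hterm : ∀ m : Fin p,
        ((Oi a c * if e = m then 1 else 0) - Si a e * P c m) *
          ((Oj b c * if e = m then 1 else 0) - Sj b e * Q c m)
        = ((if e = m then Oi a c * Oj b c else 0)
            - (if e = m then Oi a c * (Sj b e * Q c m) else 0)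
            - (if e = m then (Si a e * P c m) * Oj b c else 0))
          + (Si a e * Sj b e) * (P c m * Q c m) := by
      intro m
      by_cases h : e = m <;> simp [h] <;> ring
    rw [Finset.sum_congr rfl (fun m _ => hterm m)]
    rw [Finset.sum_add_distrib, Finset.sum_sub_distrib, Finset.sum_sub_distrib]
    simp [Finset.sum_ite_eq, ← Finset.mul_sum]
  have key : (∑ k : Fin d × Fin p, C k k)
      = (p : ℝ) * (∑ c, Oi a c * Oj b c) - (∑ c, Oi a c * Oj b c) - (∑ c, Oi a c * Oj b c)
        + (∑ e, Si a e * Sj b e) * (∑ c, ∑ m, P c m * Q c m) := by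
    rw [Fintype.sum_prod_type]
    calc ∑ c : Fin d, ∑ e : Fin p, C (c, e) (c, e)
        = ∑ c : Fin d, ∑ e : Fin p,
            (Oi a c * Oj b c - Oi a c * (Sj b e * Q c e) - (Si a e * P c e) * Oj b c
              + (Si a e * Sj b e) * ∑ m, P c m * Q c m) := by
          refine Finset.sum_congr rfl (fun c _ => Finset.sum_congr rfl (fun e _ => ?_))
          rw [← expand c e]
      _ = ∑ c : Fin d, ((p : ℝ) * (Oi a c * Oj b c) - Oi a c * (∑ e, Sj b e * Q c e)
            - (∑ e, Si a e * P c e) * Oj b c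
            + (∑ e, (Si a e * Sj b e)) * ∑ m, P c m * Q c m) := by
          refine Finset.sum_congr rfl (fun c _ => ?_)
          rw [Finset.sum_add_distrib, Finset.sum_sub_distrib, Finset.sum_sub_distrib]
          rw [Finset.sum_const, ← Finset.mul_sum, ← Finset.sum_mul, ← Finset.sum_mul]
          simp [nsmul_eq_mul]
      _ = ∑ c : Fin d, ((p : ℝ) * (Oi a c * Oj b c) - Oi a c * Oj b c
            - Oi a c * Oj b c
            + (∑ e, (Si a e * Sj b e)) * ∑ m, P c m * Q c m) := by
          refine Finset.sum_congr rfl (fun c _ => ?_)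
          rw [hQ' c, hP' c]
      _ = (p : ℝ) * (∑ c, Oi a c * Oj b c) - (∑ c, Oi a c * Oj b c) - (∑ c, Oi a c * Oj b c)
            + (∑ e, Si a e * Sj b e) * (∑ c, ∑ m, P c m * Q c m) := by
          rw [Finset.sum_add_distrib, Finset.sum_sub_distrib, Finset.sum_sub_distrib]
          rw [← Finset.mul_sum, ← Finset.mul_sum]
  rw [key]
  have htr : ((Oi.transpose * Si).transpose * (Oj.transpose * Sj)).trace
      = ∑ c, ∑ m, P c m * Q c m := by
    rw [← hP, ← hQ, Matrix.trace]
    simp only [Matrix.diag_apply, Matrix.mul_apply, Matrix.transpose_apply]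
    exact Finset.sum_comm
  have hRHS : (((p : ℝ) - 2) • (Oi * Oj.transpose) +
      ((Oi.transpose * Si).transpose * (Oj.transpose * Sj)).trace • (Si * Sj.transpose)) a b
      = ((p : ℝ) - 2) * (∑ c, Oi a c * Oj b c)
        + (∑ c, ∑ m, P c m * Q c m) * (∑ e, Si a e * Sj b e) := by
    rw [Matrix.add_apply, Matrix.smul_apply, Matrix.smul_apply, smul_eq_mul, smul_eq_mul, htr]
    simp only [Matrix.mul_apply, Matrix.transpose_apply]
  rw [hRHS]
  ring
end

section
/- Let O, Ô ∈ ℝ^{nd×d} with Oᵀ O = Ôᵀ Ô = n I_d, and suppose min_{Q ∈ O(d)} ‖Ô − O Q‖_F ≤ ε√(nd). Then all singular values of Oᵀ Ô lie in the interval [(1 − ε²d/2)·n, n]; in particular σ_min(Oᵀ Ô) ≥ (1 − ε²d/2)n. -/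
open Matrix Finset

lemma myCS_sq {ι : Type*} [Fintype ι] (x y : ι → ℝ) :
    (x ⬝ᵥ y) ^ 2 ≤ (x ⬝ᵥ x) * (y ⬝ᵥ y) := by
  have h := Finset.sum_mul_sq_le_sq_mul_sq Finset.univ x y
  simpa [dotProduct, sq] using h

lemma dot_self_nonneg' {ι : Type*} [Fintype ι] (x : ι → ℝ) : 0 ≤ x ⬝ᵥ x :=
  Finset.sum_nonneg fun i _ => mul_self_nonneg _

lemma myCS_sqrt {ι : Type*} [Fintype ι] (x y : ι → ℝ) :
    x ⬝ᵥ y ≤ Real.sqrt (x ⬝ᵥ x) * Real.sqrt (y ⬝ᵥ y) := by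
  calc x ⬝ᵥ y ≤ |x ⬝ᵥ y| := le_abs_self _
    _ = Real.sqrt ((x ⬝ᵥ y) ^ 2) := (Real.sqrt_sq_eq_abs _).symm
    _ ≤ Real.sqrt ((x ⬝ᵥ x) * (y ⬝ᵥ y)) := Real.sqrt_le_sqrt (myCS_sq x y)
    _ = _ := Real.sqrt_mul (dot_self_nonneg' x) _

lemma mulVec_dot {m k : Type*} [Fintype m] [Fintype k] (A : Matrix m k ℝ) (x : k → ℝ)
    (y : m → ℝ) : (A *ᵥ x) ⬝ᵥ y = x ⬝ᵥ (Aᵀ *ᵥ y) := by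
  rw [Matrix.dotProduct_mulVec, Matrix.vecMul_transpose]

lemma trace_eq_sum_frame {d : ℕ} (v : Fin d → (Fin d → ℝ))
    (hv : ∀ j k, ∑ i, v i j * v i k = (1 : Matrix (Fin d) (Fin d) ℝ) j k)
    (A : Matrix (Fin d) (Fin d) ℝ) :
    A.trace = ∑ i, v i ⬝ᵥ (A *ᵥ v i) := by
  have h1 : ∀ i, v i ⬝ᵥ (A *ᵥ v i) = ∑ j, ∑ k, A j k * (v i j * v i k) := by
    intro i
    simp only [dotProduct, Matrix.mulVec, dotProduct, Finset.mul_sum]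
    exact Finset.sum_congr rfl fun j _ => Finset.sum_congr rfl fun k _ => by ring
  rw [Finset.sum_congr rfl fun i _ => h1 i, Finset.sum_comm]
  have h2 : ∀ j, ∑ i, ∑ k, A j k * (v i j * v i k) = A j j := by
    intro j
    rw [Finset.sum_comm]
    have h3 : ∀ k, ∑ i, A j k * (v i j * v i k) = A j k * (1 : Matrix (Fin d) (Fin d) ℝ) j k := by
      intro k
      rw [← Finset.mul_sum, hv j k]
    rw [Finset.sum_congr rfl fun k _ => h3 k]
    simp [Matrix.one_apply]
  rw [Finset.sum_congr rfl fun j _ => h2 j]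
  rfl

/-- If `Oᵀ O = Ôᵀ Ô = n I_d` and some orthogonal `Q` satisfies
`‖Ô − O Q‖_F ≤ ε √(nd)`, then every singular value of `Oᵀ Ô` lies in
`[(1 − ε² d / 2) n, n]`. -/
theorem singular_values_of_aligned_stacks (n d : ℕ) (hn : 0 < n) (hd : 0 < d)
    (O Ohat : Matrix (Fin n × Fin d) (Fin d) ℝ)
    (hO : O.transpose * O = (n : ℝ) • 1)
    (hOhat : Ohat.transpose * Ohat = (n : ℝ) • 1)
    (ε : ℝ) (hε : 0 ≤ ε)
    (hclose : ∃ Q : Matrix (Fin d) (Fin d) ℝ, Q * Q.transpose = 1 ∧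
      Q.transpose * Q = 1 ∧
      Real.sqrt (∑ a, ∑ b, ((Ohat - O * Q) a b) ^ 2) ≤
        ε * Real.sqrt ((n : ℝ) * d)) :
    ∀ i : Fin d,
      (1 - ε ^ 2 * d / 2) * n ≤
          Real.sqrt ((Matrix.isHermitian_conjTranspose_mul_self
            (O.transpose * Ohat)).eigenvalues i) ∧
        Real.sqrt ((Matrix.isHermitian_conjTranspose_mul_self
            (O.transpose * Ohat)).eigenvalues i) ≤ n := by
  obtain ⟨Q, hQ1, hQ2, hQ3⟩ := hclose
  have hn' : (0:ℝ) < n := by exact_mod_cast hn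
  set M : Matrix (Fin d) (Fin d) ℝ := O.transpose * Ohat with hMdef
  have hH : (Mᴴ * M).IsHermitian := Matrix.isHermitian_conjTranspose_mul_self M
  have hconj : Mᴴ = Mᵀ := Matrix.conjTranspose_eq_transpose_of_trivial M
  set lam : Fin d → ℝ := hH.eigenvalues with hlamdef
  set v : Fin d → (Fin d → ℝ) := fun j => ⇑(hH.eigenvectorBasis j) with hvdef
  have heig : ∀ j, (Mᵀ * M) *ᵥ v j = lam j • v j := fun j => by
    rw [← hconj]; exact hH.mulVec_eigenvectorBasis j
  -- orthonormality via the eigenvector unitary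
  set U : Matrix (Fin d) (Fin d) ℝ := (hH.eigenvectorUnitary : Matrix (Fin d) (Fin d) ℝ)
    with hUdef
  have hUv : ∀ i j, U i j = v j i := fun i j => rfl
  have hUmem : U ∈ unitary (Matrix (Fin d) (Fin d) ℝ) := hH.eigenvectorUnitary.2
  have hU1 : U * star U = 1 := (Unitary.mem_iff.mp hUmem).2
  have hU2 : star U * U = 1 := (Unitary.mem_iff.mp hUmem).1
  have hframe : ∀ j k, ∑ i, v i j * v i k = (1 : Matrix (Fin d) (Fin d) ℝ) j k := by
    intro j k
    have h := congrFun (congrFun hU1 j) k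
    simp only [Matrix.mul_apply, Matrix.star_apply, star_trivial, hUv] at h
    exact h
  have hnorm : ∀ j, v j ⬝ᵥ v j = 1 := by
    intro j
    have h := congrFun (congrFun hU2 j) j
    simp only [Matrix.mul_apply, Matrix.star_apply, star_trivial, hUv,
      Matrix.one_apply_eq] at h
    exact h
  have hlam_eq : ∀ j, lam j = (M *ᵥ v j) ⬝ᵥ (M *ᵥ v j) := by
    intro j
    rw [mulVec_dot, Matrix.mulVec_mulVec, heig j, dotProduct_smul, smul_eq_mul,
      hnorm j, mul_one]
  have hlam_nonneg : ∀ j, 0 ≤ lam j := fun j => (hlam_eq j) ▸ dot_self_nonneg' _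
  -- upper bound
  have hupper : ∀ j, lam j ≤ (n:ℝ)^2 := by
    intro j
    have hw : (Ohat *ᵥ v j) ⬝ᵥ (Ohat *ᵥ v j) = n := by
      rw [mulVec_dot, Matrix.mulVec_mulVec, hOhat, Matrix.smul_mulVec,
        Matrix.one_mulVec, dotProduct_smul, smul_eq_mul, hnorm j, mul_one]
    set w : Fin n × Fin d → ℝ := Ohat *ᵥ v j with hwdef
    set u : Fin d → ℝ := O.transpose *ᵥ w with hudef
    have hMv : M *ᵥ v j = u := by rw [hMdef, ← Matrix.mulVec_mulVec, hudef, hwdef]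
    have hdot : u ⬝ᵥ u = w ⬝ᵥ (O *ᵥ u) := by
      rw [hudef]
      conv_lhs => rw [mulVec_dot, Matrix.transpose_transpose]
    have key : (u ⬝ᵥ u)^2 ≤ (w ⬝ᵥ w) * ((O *ᵥ u) ⬝ᵥ (O *ᵥ u)) := by
      rw [hdot]; exact myCS_sq w (O *ᵥ u)
    have hOu : (O *ᵥ u) ⬝ᵥ (O *ᵥ u) = n * (u ⬝ᵥ u) := by
      rw [mulVec_dot, Matrix.mulVec_mulVec, hO, Matrix.smul_mulVec,
        Matrix.one_mulVec, dotProduct_smul, smul_eq_mul]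
    have huu : 0 ≤ u ⬝ᵥ u := dot_self_nonneg' u
    have hlamu : lam j = u ⬝ᵥ u := by rw [hlam_eq j, hMv]
    have key2 : (u ⬝ᵥ u)^2 ≤ (n:ℝ) * ((n:ℝ) * (u ⬝ᵥ u)) := by rw [hw, hOu] at key; exact key
    rw [hlamu]
    rcases eq_or_lt_of_le huu with h0 | h0
    · rw [← h0]; positivity
    · have h3 : (u ⬝ᵥ u) * (u ⬝ᵥ u) ≤ (n:ℝ)^2 * (u ⬝ᵥ u) := by nlinarith [key2]
      exact le_of_mul_le_mul_right h3 h0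
  have hsig_le : ∀ j, Real.sqrt (lam j) ≤ n := by
    intro j
    rw [show ((n:ℝ)) = Real.sqrt ((n:ℝ)^2) from (Real.sqrt_sq (le_of_lt hn')).symm]
    exact Real.sqrt_le_sqrt (hupper j)
  -- trace identities
  have htr1 : Matrix.trace (Ohatᵀ * Ohat) = (n:ℝ) * d := by
    rw [hOhat, Matrix.trace_smul, Matrix.trace_one]
    simp [smul_eq_mul]
  have hOQ : (O*Q)ᵀ * (O*Q) = (n:ℝ) • 1 := by
    rw [Matrix.transpose_mul, Matrix.mul_assoc, ← Matrix.mul_assoc Oᵀ O Q, hO,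
      Matrix.smul_mul, Matrix.one_mul, Matrix.mul_smul, hQ2]
  have htr2 : Matrix.trace ((O*Q)ᵀ * (O*Q)) = (n:ℝ) * d := by
    rw [hOQ, Matrix.trace_smul, Matrix.trace_one]
    simp [smul_eq_mul]
  have htr3 : Matrix.trace (Ohatᵀ * (O*Q)) = Matrix.trace (Qᵀ * M) := by
    have h : (Ohatᵀ * (O*Q))ᵀ = Qᵀ * M := by
      rw [Matrix.transpose_mul, Matrix.transpose_mul, Matrix.transpose_transpose, hMdef,
        Matrix.mul_assoc]
    rw [← h, Matrix.trace_transpose]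
  have htr4 : Matrix.trace ((O*Q)ᵀ * Ohat) = Matrix.trace (Qᵀ * M) := by
    rw [Matrix.transpose_mul, Matrix.mul_assoc, hMdef]
  set T : ℝ := Matrix.trace ((Ohat - O * Q)ᵀ * (Ohat - O * Q)) with hTdef
  have hS : (∑ a, ∑ b, ((Ohat - O * Q) a b)^2) = T := by
    rw [hTdef]
    simp only [Matrix.trace, Matrix.diag_apply, Matrix.mul_apply, Matrix.transpose_apply, sq]
    exact Finset.sum_comm

  have hT_eq : T = 2*((n:ℝ)*d) - 2 * Matrix.trace (Qᵀ * M) := by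
    rw [hTdef, Matrix.transpose_sub, Matrix.sub_mul, Matrix.mul_sub, Matrix.mul_sub,
      Matrix.trace_sub,
      Matrix.trace_sub, Matrix.trace_sub, htr1, htr2, htr3, htr4]
    ring
  have hSnn : (0:ℝ) ≤ ∑ a, ∑ b, ((Ohat - O * Q) a b)^2 :=
    Finset.sum_nonneg fun a _ => Finset.sum_nonneg fun b _ => sq_nonneg _
  have hT_le : T ≤ ε^2 * ((n:ℝ)*d) := by
    rw [← hS]
    have h := pow_le_pow_left₀ (Real.sqrt_nonneg _) hQ3 2
    rw [Real.sq_sqrt hSnn, mul_pow, Real.sq_sqrt (by positivity : (0:ℝ) ≤ (n:ℝ)*d)] at h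
    exact h
  have htr_le : Matrix.trace (Qᵀ * M) ≤ ∑ j, Real.sqrt (lam j) := by
    rw [trace_eq_sum_frame v hframe]
    apply Finset.sum_le_sum
    intro j _
    have h1 : v j ⬝ᵥ ((Qᵀ * M) *ᵥ v j) = (Q *ᵥ v j) ⬝ᵥ (M *ᵥ v j) := by
      rw [← Matrix.mulVec_mulVec, ← mulVec_dot]
    have h2 : (Q *ᵥ v j) ⬝ᵥ (Q *ᵥ v j) = 1 := by
      rw [mulVec_dot, Matrix.mulVec_mulVec, hQ2, Matrix.one_mulVec, hnorm j]
    calc v j ⬝ᵥ ((Qᵀ * M) *ᵥ v j) = (Q *ᵥ v j) ⬝ᵥ (M *ᵥ v j) := h1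
      _ ≤ Real.sqrt ((Q *ᵥ v j) ⬝ᵥ (Q *ᵥ v j)) * Real.sqrt ((M *ᵥ v j) ⬝ᵥ (M *ᵥ v j)) :=
          myCS_sqrt _ _
      _ = Real.sqrt (lam j) := by rw [h2, Real.sqrt_one, one_mul, ← hlam_eq j]
  have hsum_ge : ((n:ℝ)*d) - ε^2 * ((n:ℝ)*d)/2 ≤ ∑ j, Real.sqrt (lam j) := by
    linarith [htr_le, hT_le, hT_eq]
  intro i
  refine ⟨?_, hsig_le i⟩
  have h1 : ∑ j, Real.sqrt (lam j) =
      Real.sqrt (lam i) + ∑ j ∈ Finset.univ.erase i, Real.sqrt (lam j) :=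
    (Finset.add_sum_erase _ _ (Finset.mem_univ i)).symm
  have h2 : ∑ j ∈ Finset.univ.erase i, Real.sqrt (lam j) ≤ ((d:ℝ)-1) * n := by
    calc ∑ j ∈ Finset.univ.erase i, Real.sqrt (lam j)
        ≤ ∑ _j ∈ Finset.univ.erase i, (n:ℝ) := Finset.sum_le_sum fun j _ => hsig_le j
      _ = ((Finset.univ.erase i).card : ℝ) * n := by rw [Finset.sum_const, nsmul_eq_mul]
      _ = ((d:ℝ)-1) * n := by
          rw [Finset.card_erase_of_mem (Finset.mem_univ i), Finset.card_univ, Fintype.card_fin,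
            Nat.cast_sub hd, Nat.cast_one]
  have hd1 : (1:ℝ) ≤ d := by exact_mod_cast hd
  nlinarith [hsum_ge, h1, h2]
end

section
/- Suppose A ∈ ℝ^{nd×nd} is symmetric, Ô ∈ ℝ^{nd×d} is a stack of n orthogonal matrices (Ôᵀ Ô = n I_d), L := DG(A Ô Ôᵀ) − A satisfies L Ô = 0 and L ⪰ 0 with λ_{d+1}(L) > 0, where DG is the symmetrized block-diagonal extraction. Then Ô Ôᵀ is the unique global minimizer of the SDP: min −⟨A, X⟩ subject to X ⪰ 0 and X_{ii} = I_d for all diagonal d×d blocks. -/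
open Matrix

noncomputable def blockDiagPart (n d : ℕ) (M : Matrix (Fin n × Fin d) (Fin n × Fin d) ℝ) :
    Matrix (Fin n × Fin d) (Fin n × Fin d) ℝ :=
  Matrix.of fun p q =>
    if p.1 = q.1 then (M (p.1, p.2) (p.1, q.2) + M (p.1, q.2) (p.1, p.2)) / 2 else 0

lemma trace_blockDiagPart_mul (n d : ℕ)
    (M X : Matrix (Fin n × Fin d) (Fin n × Fin d) ℝ)
    (hX : ∀ (i : Fin n) (a b : Fin d), X (i, a) (i, b) = if a = b then 1 else 0) :
    (blockDiagPart n d M * X).trace = M.trace := by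
  simp only [Matrix.trace, Matrix.diag, Matrix.mul_apply, blockDiagPart, Matrix.of_apply]
  rw [Fintype.sum_prod_type, Fintype.sum_prod_type]
  refine Finset.sum_congr rfl fun i _ => Finset.sum_congr rfl fun a _ => ?_
  rw [Fintype.sum_prod_type]
  rw [Finset.sum_eq_single i]
  · simp only [if_pos rfl]
    rw [Finset.sum_eq_single a]
    · rw [hX]; simp [add_halves]
    · intro b _ hb; rw [hX, if_neg hb, mul_zero]
    · intro h; exact absurd (Finset.mem_univ a) h
  · intro j _ hj
    simp only [if_neg (Ne.symm hj), zero_mul, Finset.sum_const_zero]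
  · intro h; exact absurd (Finset.mem_univ i) h

open scoped MatrixOrder Matrix.Norms.L2Operator in
lemma psd_exists_conjTranspose_mul {m : Type*} [Fintype m] [DecidableEq m] {L : Matrix m m ℝ}
    (hL : L.PosSemidef) : ∃ B : Matrix m m ℝ, L = Bᴴ * B := by
  obtain ⟨B, hB⟩ := CStarAlgebra.nonneg_iff_eq_star_mul_self.mp hL.nonneg
  exact ⟨B, hB⟩

lemma psd_trace_mul {m : Type*} [Fintype m] [DecidableEq m] {L X : Matrix m m ℝ}
    (hL : L.PosSemidef) (hX : X.PosSemidef) :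
    0 ≤ (L * X).trace ∧ ((L * X).trace = 0 → L * X = 0) := by
  obtain ⟨B, rfl⟩ := psd_exists_conjTranspose_mul hL
  obtain ⟨C, rfl⟩ := psd_exists_conjTranspose_mul hX
  set Y := B * Cᴴ with hY
  have hLX : Bᴴ * B * (Cᴴ * C) = Bᴴ * Y * C := by
    simp [hY, Matrix.mul_assoc]
  have htr : (Bᴴ * B * (Cᴴ * C)).trace = (Y * Yᴴ).trace := by
    rw [hY, Matrix.conjTranspose_mul, Matrix.conjTranspose_conjTranspose]
    rw [Matrix.trace_mul_comm (B * Cᴴ) (C * Bᴴ)]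
    simp only [Matrix.mul_assoc]
    rw [Matrix.trace_mul_comm Bᴴ]
    simp only [Matrix.mul_assoc]
    rw [Matrix.trace_mul_comm B]
    simp only [Matrix.mul_assoc]
    rw [Matrix.trace_mul_comm Cᴴ]
    simp only [Matrix.mul_assoc]
  have hsum : (Y * Yᴴ).trace = ∑ i, ∑ j, (Y i j)^2 := by
    simp [Matrix.trace, Matrix.diag, Matrix.mul_apply, Matrix.conjTranspose_apply, sq]
  constructor
  · rw [htr, hsum]; positivity
  · intro h
    rw [htr, hsum] at h
    have hY0 : Y = 0 := by
      ext i j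
      have h1 : ∀ i ∈ Finset.univ, (0:ℝ) ≤ ∑ j, (Y i j)^2 := by
        intro i _; positivity
      have h2 := (Finset.sum_eq_zero_iff_of_nonneg h1).mp h i (Finset.mem_univ i)
      have h3 : ∀ j ∈ Finset.univ, (0:ℝ) ≤ (Y i j)^2 := fun j _ => sq_nonneg _
      have h4 := (Finset.sum_eq_zero_iff_of_nonneg h3).mp h2 j (Finset.mem_univ j)
      simpa using pow_eq_zero_iff (n := 2) (by norm_num) |>.mp h4
    rw [hLX, hY0, Matrix.mul_zero, Matrix.zero_mul]

lemma card_nonzero_ge (n d : ℕ) (hdn : d < n * d) (lam : Fin n × Fin d → ℝ)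
    (hgap : 0 < ((fun k : Fin (n * d) => lam (finProdFinEquiv.symm k)) ∘
        Tuple.sort (fun k : Fin (n * d) => lam (finProdFinEquiv.symm k))) ⟨d, hdn⟩) :
    n * d - d ≤ Fintype.card {j // lam j ≠ 0} := by
  set f : Fin (n * d) → ℝ := fun k => lam (finProdFinEquiv.symm k) with hf
  set σ := Tuple.sort f with hσ
  have hmono := Tuple.monotone_sort f
  have key : ∀ k : Fin (n * d), f (σ k) = 0 → (k : ℕ) < d := by
    intro k hk
    by_contra h
    push_neg at h
    have hle : (⟨d, hdn⟩ : Fin (n * d)) ≤ k := by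
      rw [Fin.le_def]; exact h
    have := hmono hle
    rw [Function.comp_apply, Function.comp_apply, hk] at this
    exact absurd (lt_of_lt_of_le hgap this) (lt_irrefl 0)
  have c1 : Fintype.card {k : Fin (n * d) // f (σ k) = 0} ≤ d := by
    calc Fintype.card {k : Fin (n * d) // f (σ k) = 0}
        ≤ Fintype.card (Fin d) := by
          apply Fintype.card_le_of_injective (fun x => (⟨x.1, key x.1 x.2⟩ : Fin d))
          intro x y h
          apply Subtype.ext
          simpa [Fin.ext_iff] using h
      _ = d := Fintype.card_fin d
  have e1 : {j : Fin n × Fin d // lam j = 0} ≃ {k : Fin (n * d) // f k = 0} :=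
    Equiv.subtypeEquiv finProdFinEquiv (fun j => by simp only [hf, Equiv.symm_apply_apply])
  have e2 : {k : Fin (n * d) // f k = 0} ≃ {k : Fin (n * d) // f (σ k) = 0} :=
    Equiv.subtypeEquiv σ.symm (fun k => by simp)
  have c2 : Fintype.card {j : Fin n × Fin d // lam j = 0} ≤ d := by
    rw [Fintype.card_congr (e1.trans e2)]; exact c1
  have c3 : Fintype.card {j // lam j ≠ 0}
      = Fintype.card (Fin n × Fin d) - Fintype.card {j : Fin n × Fin d // lam j = 0} :=
    Fintype.card_subtype_compl _
  rw [c3]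
  simp only [Fintype.card_prod, Fintype.card_fin]
  omega

/-- KKT certificate for tightness of the orthogonal-group-synchronization SDP:
if `A` is symmetric, `Ô` stacks `n` orthogonal `d × d` matrices,
`L = DG(A Ô Ôᵀ) − A` satisfies `L Ô = 0`, `L ⪰ 0` and `λ_{d+1}(L) > 0`, then
`Ô Ôᵀ` is the unique global minimizer of `min −⟨A, X⟩` over PSD `X` with
identity diagonal blocks. -/
theorem sdp_unique_minimizer_of_certificate (n d : ℕ) (hdn : d < n * d)
    (A : Matrix (Fin n × Fin d) (Fin n × Fin d) ℝ) (hA : A.IsSymm)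
    (Ohat : Matrix (Fin n × Fin d) (Fin d) ℝ)
    (hOhatBlocks : ∀ i : Fin n,
      (Matrix.of fun a b : Fin d => Ohat (i, a) b) *
        (Matrix.of fun a b : Fin d => Ohat (i, a) b).transpose = 1)
    (L : Matrix (Fin n × Fin d) (Fin n × Fin d) ℝ)
    (hLdef : L = blockDiagPart n d (A * (Ohat * Ohat.transpose)) - A)
    (hLO : L * Ohat = 0) (hL : L.PosSemidef)
    (hgap : 0 <
      ((fun k : Fin (n * d) =>
          hL.isHermitian.eigenvalues (finProdFinEquiv.symm k)) ∘
        Tuple.sort (fun k : Fin (n * d) =>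
          hL.isHermitian.eigenvalues (finProdFinEquiv.symm k))) ⟨d, hdn⟩) :
    ∀ X : Matrix (Fin n × Fin d) (Fin n × Fin d) ℝ, X.PosSemidef →
      (∀ (i : Fin n) (a b : Fin d),
        X (i, a) (i, b) = if a = b then 1 else 0) →
      -(A * (Ohat * Ohat.transpose)).trace ≤ -(A * X).trace ∧
        ((A * X).trace = (A * (Ohat * Ohat.transpose)).trace →
          X = Ohat * Ohat.transpose) := by
  intro X hX hXblocks
  have hn : 0 < n := by
    rcases Nat.eq_zero_or_pos n with h | h
    · subst h; simp at hdn
    · exact h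
  -- trace identity
  have htrL : (L * X).trace = (A * (Ohat * Ohat.transpose)).trace - (A * X).trace := by
    rw [hLdef, Matrix.sub_mul, Matrix.trace_sub,
      trace_blockDiagPart_mul n d _ X hXblocks]
  obtain ⟨hnn, hzero⟩ := psd_trace_mul hL hX
  constructor
  · linarith
  · intro heq
    have h0 : (L * X).trace = 0 := by rw [htrL, heq]; ring
    have hLX0 : L * X = 0 := hzero h0
    -- Ohatᵀ * Ohat = n • 1
    have hIsq : ∀ i : Fin n,
        (Matrix.of fun a b : Fin d => Ohat (i, a) b).transpose *
          (Matrix.of fun a b : Fin d => Ohat (i, a) b) = 1 :=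
      fun i => mul_eq_one_comm.mp (hOhatBlocks i)
    have hOOT : Ohat.transpose * Ohat = (n : ℝ) • (1 : Matrix (Fin d) (Fin d) ℝ) := by
      ext a b
      simp only [Matrix.mul_apply, Matrix.transpose_apply, Matrix.smul_apply, smul_eq_mul]
      rw [Fintype.sum_prod_type]
      have hin : ∀ i : Fin n, ∑ c : Fin d, Ohat (i, c) a * Ohat (i, c) b
          = (1 : Matrix (Fin d) (Fin d) ℝ) a b := by
        intro i
        have := congrFun (congrFun (hIsq i) a) b
        simpa [Matrix.mul_apply, Matrix.transpose_apply, Matrix.of_apply] using this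
      rw [Finset.sum_congr rfl (fun i _ => hin i), Finset.sum_const, Finset.card_univ,
        Fintype.card_fin, nsmul_eq_mul]
    -- kernel = range Ohat
    have hinj : Function.Injective (Matrix.mulVecLin Ohat) := by
      intro v w h
      simp only [Matrix.mulVecLin_apply] at h
      have h2 := congrArg (fun u => Ohat.transpose *ᵥ u) h
      simp only [Matrix.mulVec_mulVec, hOOT] at h2
      have h3 : (n : ℝ) • v = (n : ℝ) • w := by
        have := h2
        rwa [Matrix.smul_mulVec, Matrix.smul_mulVec, Matrix.one_mulVec,
          Matrix.one_mulVec] at this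
      have hne : (n : ℝ) ≠ 0 := Nat.cast_ne_zero.mpr hn.ne'
      exact smul_right_injective _ hne h3
    have hrangeOle : LinearMap.range Ohat.mulVecLin ≤ LinearMap.ker L.mulVecLin := by
      rintro _ ⟨v, rfl⟩
      simp only [LinearMap.mem_ker, Matrix.mulVecLin_apply, Matrix.mulVec_mulVec, hLO,
        Matrix.zero_mulVec]
    have hfrO : Module.finrank ℝ (LinearMap.range Ohat.mulVecLin) = d := by
      rw [LinearMap.finrank_range_of_inj hinj, Module.finrank_fintype_fun_eq_card,
        Fintype.card_fin]
    have hrank_ge : n * d - d ≤ L.rank :=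
      (hL.isHermitian.rank_eq_card_non_zero_eigs ▸
        card_nonzero_ge n d hdn hL.isHermitian.eigenvalues hgap)
    have hrn := LinearMap.finrank_range_add_finrank_ker (Matrix.mulVecLin L)
    rw [Module.finrank_fintype_fun_eq_card, Fintype.card_prod, Fintype.card_fin,
      Fintype.card_fin] at hrn
    have hkerle : Module.finrank ℝ (LinearMap.ker L.mulVecLin) ≤ d := by
      have : L.rank = Module.finrank ℝ (LinearMap.range L.mulVecLin) := rfl
      omega
    have hkereq : LinearMap.range Ohat.mulVecLin = LinearMap.ker L.mulVecLin :=
      Submodule.eq_of_le_of_finrank_le hrangeOle (by rw [hfrO]; exact hkerle)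
    -- P * X = X
    set P : Matrix (Fin n × Fin d) (Fin n × Fin d) ℝ :=
      (n : ℝ)⁻¹ • (Ohat * Ohat.transpose) with hP
    have hne : (n : ℝ) ≠ 0 := Nat.cast_ne_zero.mpr hn.ne'
    have hPO : P * Ohat = Ohat := by
      rw [hP, Matrix.smul_mul, Matrix.mul_assoc, hOOT, Matrix.mul_smul, Matrix.mul_one,
        smul_smul, inv_mul_cancel₀ hne, one_smul]
    have hPX : P * X = X := by
      ext p q
      have hcol : X *ᵥ Pi.single q 1 ∈ LinearMap.ker L.mulVecLin := by
        simp only [LinearMap.mem_ker, Matrix.mulVecLin_apply, Matrix.mulVec_mulVec, hLX0,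
          Matrix.zero_mulVec]
      rw [← hkereq] at hcol
      obtain ⟨w, hw⟩ := hcol
      simp only [Matrix.mulVecLin_apply] at hw
      have hPact : P *ᵥ (X *ᵥ Pi.single q 1) = X *ᵥ Pi.single q 1 := by
        rw [← hw, Matrix.mulVec_mulVec, hPO]
      have := congrFun hPact p
      rw [Matrix.mulVec_single_one] at this
      simpa [Matrix.mulVec_mulVec, Matrix.mulVec_single, mul_one, Matrix.mul_apply, Matrix.mulVec, dotProduct] using this
    have hXsym : X.transpose = X := by
      have := hX.isHermitian
      rwa [Matrix.IsHermitian, Matrix.conjTranspose_eq_transpose_of_trivial] at this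
    have hPsym : P.transpose = P := by
      rw [hP, Matrix.transpose_smul, Matrix.transpose_mul, Matrix.transpose_transpose]
    have hXP : X * P = X := by
      calc X * P = (P.transpose * X.transpose).transpose := by
            rw [Matrix.transpose_mul, Matrix.transpose_transpose, Matrix.transpose_transpose]
        _ = X := by rw [hPsym, hXsym, hPX, hXsym]
    -- X = Ohat * S * Ohatᵀ
    set S : Matrix (Fin d) (Fin d) ℝ :=
      (n : ℝ)⁻¹ • ((n : ℝ)⁻¹ • (Ohat.transpose * X * Ohat)) with hS
    have hXform : X = Ohat * S * Ohat.transpose := by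
      calc X = P * (X * P) := by rw [hXP, hPX]
        _ = Ohat * S * Ohat.transpose := by
            rw [hP, hS]
            simp only [Matrix.smul_mul, Matrix.mul_smul]
            congr 1
            simp only [Matrix.mul_assoc]
    -- extract block at i0
    set i0 : Fin n := ⟨0, hn⟩
    set Oi : Matrix (Fin d) (Fin d) ℝ := Matrix.of fun a b : Fin d => Ohat (i0, a) b with hOi
    have h1 : Oi * Oi.transpose = 1 := hOhatBlocks i0
    have h2 : Oi.transpose * Oi = 1 := mul_eq_one_comm.mp h1
    have hblock : Oi * S * Oi.transpose = 1 := by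
      ext a b
      have hXab := hXblocks i0 a b
      rw [hXform] at hXab
      have lhs_eq : (Ohat * S * Ohat.transpose) (i0, a) (i0, b)
          = (Oi * S * Oi.transpose) a b := by
        simp [Matrix.mul_apply, Matrix.transpose_apply, hOi]
      rw [lhs_eq] at hXab
      rw [hXab, Matrix.one_apply]
    have hS1 : S = 1 := by
      calc S = (Oi.transpose * Oi) * S * (Oi.transpose * Oi) := by rw [h2]; simp
        _ = Oi.transpose * (Oi * S * Oi.transpose) * Oi := by
            simp only [Matrix.mul_assoc]
        _ = 1 := by rw [hblock, Matrix.mul_one, h2]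
    rw [hXform, hS1, Matrix.mul_one]
end

section
/- Let L be an n×n symmetric PSD matrix with Lx = 0 for x ∈ {±1}^n and λ_2(L) > 0, and let p ≥ 2λ_max(L)/λ_2(L) + 1. Let S ∈ ℝ^{n×p} have unit-norm rows s_i. Define X_{ij} = x_i x_j ⟨s_i, s_j⟩. If the second-order condition ⟨L − Diag((LSSᵀ)_{11},...,(LSSᵀ)_{nn}), Ṡ Ṡᵀ⟩ ≥ 0 holds for Ṡ_i = x_i Φ − s_i Φᵀ x_i s_i averaged over standard Gaussian Φ ∈ ℝ^{1×p}, then the averaged quadratic form satisfies the bound ⟨L − Diag(LSSᵀ), E[Ṡ Ṡᵀ]⟩ ≤ (2λ_max(L) − (p−1)λ_2(L))·(n − n^{-1}⟨X, J_n⟩), which forces ⟨X, J_n⟩ = n² and hence s_i = x_i x_j s_j for all i, j (i.e., S Sᵀ = x xᵀ). -/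
open MeasureTheory ProbabilityTheory Real Set Matrix

/-- The Gaussian-averaged tangent direction used in the `d = 1` landscape theorem:
`Ṡ_i(φ) = x_i φ − x_i ⟨s_i, φ⟩ s_i`. -/
noncomputable def Sdot {n p : ℕ} (x : Fin n → ℝ) (S : Matrix (Fin n) (Fin p) ℝ)
    (φ : Fin p → ℝ) (i : Fin n) (k : Fin p) : ℝ :=
  x i * φ k - x i * (∑ l, S i l * φ l) * S i k

lemma gaussPDFReal_eq (x : ℝ) :
    gaussianPDFReal 0 1 x = (Real.sqrt (2 * π))⁻¹ * rexp (-x ^ 2 / 2) := by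
  simp [gaussianPDFReal]

lemma integrable_pow_gauss (m : ℕ) :
    Integrable (fun x : ℝ => x ^ m) (gaussianReal 0 1) := by
  rw [gaussianReal_of_var_ne_zero 0 one_ne_zero]
  rw [integrable_withDensity_iff (measurable_gaussianPDF 0 1)
    (Filter.Eventually.of_forall fun x => ENNReal.ofReal_lt_top)]
  have h : ∀ x : ℝ, x ^ m * ((gaussianPDF 0 1 x).toReal)
      = (Real.sqrt (2 * π))⁻¹ * (x ^ (m : ℝ) * rexp (-(1/2 : ℝ) * x ^ 2)) := by
    intro x
    rw [gaussianPDF_def, ENNReal.toReal_ofReal (gaussianPDFReal_nonneg 0 1 x), gaussPDFReal_eq]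
    rw [Real.rpow_natCast]
    ring_nf
  simp only [h]
  exact ((integrable_rpow_mul_exp_neg_mul_sq (by norm_num : (0:ℝ) < 1/2)
    (lt_of_lt_of_le neg_one_lt_zero (Nat.cast_nonneg m))).const_mul _)

lemma integral_sq_gauss : ∫ x : ℝ, x ^ 2 ∂(gaussianReal 0 1) = 1 := by
  rw [gaussianReal_of_var_ne_zero 0 one_ne_zero]
  have hmeas : Measurable fun x : ℝ => (gaussianPDFReal 0 1 x).toNNReal :=
    (measurable_gaussianPDFReal 0 1).real_toNNReal
  have hwd : (volume : Measure ℝ).withDensity (gaussianPDF 0 1)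
      = (volume : Measure ℝ).withDensity (fun x => ((gaussianPDFReal 0 1 x).toNNReal : ENNReal)) := rfl
  rw [hwd, integral_withDensity_eq_integral_smul hmeas]
  have h : ∀ x : ℝ, (gaussianPDFReal 0 1 x).toNNReal • x ^ 2
      = (Real.sqrt (2 * π))⁻¹ * ((fun y => y ^ 2 * rexp (-y ^ 2 / 2)) |x|) := by
    intro x
    rw [NNReal.smul_def, smul_eq_mul, Real.coe_toNNReal _ (gaussianPDFReal_nonneg 0 1 x),
      gaussPDFReal_eq]
    simp [sq_abs]
    ring
  simp only [h]
  rw [integral_const_mul, integral_comp_abs (f := fun y : ℝ => y ^ 2 * rexp (-y ^ 2 / 2))]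
  have hioi : ∫ x in Ioi (0:ℝ), x ^ 2 * rexp (-x ^ 2 / 2)
      = ∫ x in Ioi (0:ℝ), x ^ (2:ℝ) * rexp (-(1/2 : ℝ) * x ^ (2:ℝ)) := by
    refine setIntegral_congr_fun measurableSet_Ioi (fun x hx => ?_)
    rw [Real.rpow_two]
    ring_nf
  rw [hioi, integral_rpow_mul_exp_neg_mul_rpow (by norm_num) (by norm_num) (by norm_num)]
  have hg : Real.Gamma ((2 + 1) / 2) = Real.sqrt π / 2 := by
    have h1 : ((2:ℝ) + 1) / 2 = 1/2 + 1 := by norm_num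
    rw [h1, Real.Gamma_add_one (by norm_num), Real.Gamma_one_half_eq]
    ring
  rw [hg]
  rw [show ((1:ℝ)/2 : ℝ) ^ (-((2:ℝ) + 1) / 2 : ℝ) = 2 ^ ((3:ℝ)/2) by
    rw [one_div, ← Real.rpow_neg_one 2, ← Real.rpow_mul (by norm_num : (0:ℝ) ≤ 2)]
    norm_num]
  have h2 : Real.sqrt (2 * π) = Real.sqrt 2 * Real.sqrt π := Real.sqrt_mul (by norm_num) _
  have h3 : (2:ℝ) ^ ((3:ℝ)/2) = 2 * Real.sqrt 2 := by
    rw [show (3:ℝ)/2 = 1 + 1/2 by norm_num, Real.rpow_add (by norm_num : (0:ℝ) < 2),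
      Real.rpow_one, ← Real.sqrt_eq_rpow]
  rw [h2, h3]
  have hπ : Real.sqrt π > 0 := Real.sqrt_pos.mpr Real.pi_pos
  have h2' : Real.sqrt 2 > 0 := by positivity
  field_simp

lemma measurePreserving_evalG {p : ℕ} (k : Fin p) :
    MeasurePreserving (fun φ : Fin p → ℝ => φ k)
      (Measure.pi fun _ : Fin p => gaussianReal 0 1) (gaussianReal 0 1) := by
  refine ⟨measurable_pi_apply k, ?_⟩
  ext s hs
  rw [Measure.map_apply (measurable_pi_apply k) hs]
  have hpre : (fun φ : Fin p → ℝ => φ k) ⁻¹' s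
      = Set.univ.pi (Function.update (fun _ => Set.univ) k s) := Set.eval_preimage
  rw [hpre, Measure.pi_pi]
  rw [Finset.prod_eq_single k (fun i _ hik => by simp [Function.update_apply, hik])
    (by simp)]
  simp

lemma integrable_eval_sq {p : ℕ} (k : Fin p) :
    Integrable (fun φ : Fin p → ℝ => (φ k) ^ 2)
      (Measure.pi fun _ : Fin p => gaussianReal 0 1) :=
  ((measurePreserving_evalG k).integrable_comp
    (integrable_pow_gauss 2).aestronglyMeasurable).mpr (integrable_pow_gauss 2)

lemma integrable_eval_mul {p : ℕ} (k l : Fin p) :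
    Integrable (fun φ : Fin p → ℝ => φ k * φ l)
      (Measure.pi fun _ : Fin p => gaussianReal 0 1) := by
  refine Integrable.mono' (((integrable_eval_sq k).add (integrable_eval_sq l)).div_const 2)
    ((measurable_pi_apply k).mul (measurable_pi_apply l)).aestronglyMeasurable
    (Filter.Eventually.of_forall fun φ => ?_)
  rw [Real.norm_eq_abs, abs_mul]
  simp only [Pi.add_apply]
  nlinarith [sq_abs (φ k), sq_abs (φ l), sq_nonneg (|φ k| - |φ l|),
    abs_nonneg (φ k), abs_nonneg (φ l)]

lemma integral_eval_mul {p : ℕ} (k l : Fin p) :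
    ∫ φ : Fin p → ℝ, φ k * φ l ∂(Measure.pi fun _ : Fin p => gaussianReal 0 1)
      = if k = l then 1 else 0 := by
  split_ifs with hkl
  · subst hkl
    have hmap := (measurePreserving_evalG (p := p) k).map_eq
    have h := integral_map (μ := Measure.pi fun _ : Fin p => gaussianReal 0 1)
      (f := fun x : ℝ => x * x) (measurable_pi_apply k).aemeasurable
      (by rw [hmap]; exact (measurable_id.mul measurable_id).aestronglyMeasurable)
    rw [hmap] at h
    rw [← h]
    simp_rw [← sq]
    exact integral_sq_gauss
  · set μp := Measure.pi fun _ : Fin p => gaussianReal 0 1 with hμp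
    set T : (Fin p → ℝ) → (Fin p → ℝ) :=
      fun φ i => (if i = k then (-1 : ℝ) else 1) * φ i with hT
    have hTmp : MeasurePreserving T μp μp := by
      refine measurePreserving_pi _ _ (fun i => ⟨measurable_const_mul _, ?_⟩)
      by_cases hik : i = k
      · subst hik
        rw [if_pos rfl]
        have hm := gaussianReal_map_const_mul (μ := 0) (v := 1) (-1 : ℝ)
        have hv : (⟨(-1 : ℝ) ^ 2, by positivity⟩ : NNReal) * 1 = 1 := by
          ext; norm_num
        rw [mul_zero] at hm
        convert hm using 2
        exact hv.symm
      · rw [if_neg hik]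
        have hid : Measure.map (fun x : ℝ => (1:ℝ) * x) (gaussianReal 0 1) = gaussianReal 0 1 := by
          simp
        exact hid
    have hmeas : AEStronglyMeasurable (fun φ : Fin p → ℝ => φ k * φ l) (Measure.map T μp) :=
      (((measurable_pi_apply k).mul (measurable_pi_apply l)).aestronglyMeasurable).mono_ac
        (by rw [hTmp.map_eq])
    have key : ∫ φ, φ k * φ l ∂μp = ∫ φ, (T φ) k * (T φ) l ∂μp := by
      conv_lhs => rw [← hTmp.map_eq]
      exact integral_map hTmp.measurable.aemeasurable hmeas
    have hTk : ∀ φ : Fin p → ℝ, (T φ) k * (T φ) l = -(φ k * φ l) := by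
      intro φ
      simp only [hT]
      split_ifs with h1 h2
      · exact absurd h2.symm hkl
      · ring
      · exact absurd trivial h1
      · exact absurd trivial h1
    simp_rw [hTk, integral_neg] at key
    linarith

lemma integral_quadform {p : ℕ} (D : Fin p → Fin p → ℝ) :
    ∫ φ : Fin p → ℝ, (∑ k, ∑ l, D k l * (φ k * φ l))
      ∂(Measure.pi fun _ : Fin p => gaussianReal 0 1) = ∑ k, D k k := by
  rw [integral_finset_sum _ (fun k _ =>
    integrable_finset_sum _ (fun l _ => (integrable_eval_mul k l).const_mul _))]
  have : ∀ k : Fin p, (∫ φ : Fin p → ℝ, (∑ l, D k l * (φ k * φ l))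
      ∂(Measure.pi fun _ : Fin p => gaussianReal 0 1)) = D k k := by
    intro k
    rw [integral_finset_sum _ (fun l _ => (integrable_eval_mul k l).const_mul _)]
    have : ∀ l : Fin p, (∫ φ : Fin p → ℝ, D k l * (φ k * φ l)
        ∂(Measure.pi fun _ : Fin p => gaussianReal 0 1)) = if k = l then D k l else 0 := by
      intro l
      rw [integral_const_mul, integral_eval_mul]
      split_ifs <;> simp
    simp_rw [this]
    simp
  simp_rw [this]

lemma spectral_quad {n : ℕ} (hn : 2 ≤ n) {L : Matrix (Fin n) (Fin n) ℝ} (hL : L.PosSemidef)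
    (x : Fin n → ℝ) (hLx : L.mulVec x = 0) (hx0 : x ≠ 0)
    (hlam2 : 0 < sortedEigenvalues hL.isHermitian ⟨1, Nat.lt_of_lt_of_le Nat.one_lt_two hn⟩) :
    (∀ u : Fin n → ℝ, u ⬝ᵥ L.mulVec u
        ≤ sortedEigenvalues hL.isHermitian ⟨n - 1, Nat.sub_lt (Nat.lt_of_lt_of_le Nat.two_pos hn) Nat.one_pos⟩ * (u ⬝ᵥ u)) ∧
    (∀ u : Fin n → ℝ, u ⬝ᵥ x = 0 →
        sortedEigenvalues hL.isHermitian ⟨1, Nat.lt_of_lt_of_le Nat.one_lt_two hn⟩ * (u ⬝ᵥ u) ≤ u ⬝ᵥ L.mulVec u) := by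
  have he := hL.isHermitian
  set μ : Fin n → ℝ := he.eigenvalues with hμ
  set σ := Tuple.sort μ with hσ
  have hmono : Monotone (μ ∘ σ) := Tuple.monotone_sort μ
  set V : Matrix (Fin n) (Fin n) ℝ := (he.eigenvectorUnitary : Matrix (Fin n) (Fin n) ℝ) with hV
  have hstar : star V = V.transpose := by
    rw [Matrix.star_eq_conjTranspose]
    ext i j
    simp [Matrix.conjTranspose_apply, Matrix.transpose_apply]
  have hVV : V * V.transpose = 1 := by
    rw [← hstar]; exact (Matrix.mem_unitaryGroup_iff).mp (he.eigenvectorUnitary).2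
  have hVtV : V.transpose * V = 1 := by
    rw [← hstar]; exact (Matrix.mem_unitaryGroup_iff').mp (he.eigenvectorUnitary).2
  have hspec : L = V * Matrix.diagonal μ * V.transpose := by
    have h := he.spectral_theorem
    rw [Unitary.conjStarAlgAut_apply, hstar] at h
    exact h
  -- coordinates
  set c : (Fin n → ℝ) → (Fin n → ℝ) := fun u => V.transpose.mulVec u with hc
  have hdot : ∀ u w : Fin n → ℝ, u ⬝ᵥ w = c u ⬝ᵥ c w := by
    intro u w
    calc u ⬝ᵥ w = u ⬝ᵥ ((V * V.transpose).mulVec w) := by rw [hVV, Matrix.one_mulVec]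
    _ = u ⬝ᵥ V.mulVec (V.transpose.mulVec w) := by rw [Matrix.mulVec_mulVec]
    _ = c u ⬝ᵥ c w := by
        rw [Matrix.dotProduct_mulVec, ← Matrix.mulVec_transpose]
  have hquad : ∀ u : Fin n → ℝ, u ⬝ᵥ L.mulVec u = ∑ k, μ k * (c u k) ^ 2 := by
    intro u
    conv_lhs => rw [hspec]
    rw [show (V * Matrix.diagonal μ * V.transpose).mulVec u
        = V.mulVec ((Matrix.diagonal μ).mulVec (c u)) by
      rw [← Matrix.mulVec_mulVec, ← Matrix.mulVec_mulVec]]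
    rw [Matrix.dotProduct_mulVec, ← Matrix.mulVec_transpose]
    simp only [dotProduct, Matrix.mulVec_diagonal]
    exact Finset.sum_congr rfl fun k _ => by ring
  -- x eigen-coordinates
  have hDcx : ∀ k, μ k * c x k = 0 := by
    intro k
    have h0 : (Matrix.diagonal μ).mulVec (c x) = 0 := by
      have h1 : V.mulVec ((Matrix.diagonal μ).mulVec (c x)) = 0 := by
        rw [Matrix.mulVec_mulVec, Matrix.mulVec_mulVec, ← hspec, hLx]
      have h2 := congrArg (V.transpose.mulVec ·) h1
      simpa [Matrix.mulVec_mulVec, ← Matrix.mul_assoc, hVtV, Matrix.one_mulVec] using h2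
    have := congrFun h0 k
    simpa [Matrix.mulVec_diagonal] using this
  have hVcx : V.mulVec (c x) = x := by
    show V.mulVec (V.transpose.mulVec x) = x
    rw [Matrix.mulVec_mulVec, hVV, Matrix.one_mulVec]
  obtain ⟨k₀, hk₀⟩ : ∃ k₀, c x k₀ ≠ 0 := by
    by_contra h
    push_neg at h
    apply hx0
    rw [← hVcx, show c x = 0 from funext fun k => h k, Matrix.mulVec_zero]
  have hμk₀ : μ k₀ = 0 := by
    rcases mul_eq_zero.mp (hDcx k₀) with h | h
    · exact h
    · exact absurd h hk₀
  have hnonneg : ∀ k, 0 ≤ μ k := hL.eigenvalues_nonneg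
  -- index bookkeeping
  have hj₀ : σ.symm k₀ = ⟨0, by omega⟩ := by
    by_contra hj
    have h1le : (1 : ℕ) ≤ (σ.symm k₀ : ℕ) := by
      rcases Nat.eq_zero_or_pos (σ.symm k₀ : ℕ) with h | h
      · exact absurd (Fin.ext h) hj
      · omega
    have := hmono (show (⟨1, by omega⟩ : Fin n) ≤ σ.symm k₀ from by
      rw [Fin.le_def]; exact h1le)
    rw [Function.comp_apply, Function.comp_apply, Equiv.apply_symm_apply] at this
    rw [hμk₀] at this
    have : sortedEigenvalues hL.isHermitian ⟨1, by omega⟩ ≤ 0 := this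
    linarith
  have hk_ge : ∀ k, k ≠ k₀ → sortedEigenvalues hL.isHermitian ⟨1, by omega⟩ ≤ μ k := by
    intro k hk
    have h1le : (1 : ℕ) ≤ (σ.symm k : ℕ) := by
      rcases Nat.eq_zero_or_pos (σ.symm k : ℕ) with h | h
      · exfalso
        apply hk
        have : σ.symm k = σ.symm k₀ := by rw [hj₀]; exact Fin.ext h
        exact σ.symm.injective this
      · omega
    have := hmono (show (⟨1, by omega⟩ : Fin n) ≤ σ.symm k from by rw [Fin.le_def]; exact h1le)
    rw [Function.comp_apply, Function.comp_apply, Equiv.apply_symm_apply] at this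
    exact this
  have hmax : ∀ k, μ k ≤ sortedEigenvalues hL.isHermitian ⟨n - 1, by omega⟩ := by
    intro k
    have := hmono (show σ.symm k ≤ (⟨n - 1, by omega⟩ : Fin n) from by
      rw [Fin.le_def]
      exact Nat.le_pred_of_lt (σ.symm k).isLt)
    rw [Function.comp_apply, Function.comp_apply, Equiv.apply_symm_apply] at this
    exact this
  constructor
  · intro u
    rw [hquad u, hdot u u]
    have : ∀ k : Fin n, μ k * (c u k) ^ 2
        ≤ sortedEigenvalues hL.isHermitian ⟨n - 1, by omega⟩ * (c u k) ^ 2 :=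
      fun k => mul_le_mul_of_nonneg_right (hmax k) (sq_nonneg _)
    calc ∑ k, μ k * (c u k) ^ 2
        ≤ ∑ k, sortedEigenvalues hL.isHermitian ⟨n - 1, by omega⟩ * (c u k) ^ 2 :=
          Finset.sum_le_sum fun k _ => this k
      _ = sortedEigenvalues hL.isHermitian ⟨n - 1, by omega⟩ * ∑ k, (c u k) ^ 2 := by
          rw [Finset.mul_sum]
      _ = _ := by
          congr 1
          simp only [dotProduct]
          exact Finset.sum_congr rfl fun k _ => sq (c u k)
  · intro u hux
    have hcu0 : c u k₀ = 0 := by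
      have h1 : u ⬝ᵥ x = c u ⬝ᵥ c x := hdot u x
      have h2 : c u ⬝ᵥ c x = c u k₀ * c x k₀ := by
        rw [dotProduct]
        rw [Finset.sum_eq_single k₀]
        · intro k _ hk
          have : c x k = 0 := by
            rcases mul_eq_zero.mp (hDcx k) with h | h
            · exact absurd h (by
                have := hk_ge k hk
                intro hcontra
                rw [hcontra] at this
                linarith)
            · exact h
          rw [this, mul_zero]
        · intro h
          exact absurd (Finset.mem_univ k₀) h
      rw [hux] at h1
      have h3 : c u k₀ * c x k₀ = 0 := by rw [← h2, ← h1]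
      exact (mul_eq_zero.mp h3).resolve_right hk₀
    rw [hquad u, hdot u u]
    have hsum : ∀ k : Fin n, sortedEigenvalues hL.isHermitian ⟨1, by omega⟩ * (c u k) ^ 2
        ≤ μ k * (c u k) ^ 2 := by
      intro k
      by_cases hk : k = k₀
      · subst hk
        rw [hcu0]
        simp
      · exact mul_le_mul_of_nonneg_right (hk_ge k hk) (sq_nonneg _)
    calc sortedEigenvalues hL.isHermitian ⟨1, by omega⟩ * (c u ⬝ᵥ c u)
        = ∑ k, sortedEigenvalues hL.isHermitian ⟨1, by omega⟩ * (c u k) ^ 2 := by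
          rw [← Finset.mul_sum]
          congr 1
          simp only [dotProduct]
          exact Finset.sum_congr rfl fun k _ => (sq (c u k)).symm
      _ ≤ ∑ k, μ k * (c u k) ^ 2 := Finset.sum_le_sum fun k _ => hsum k

lemma quad_bounds {n : ℕ} (hn : 2 ≤ n) {L : Matrix (Fin n) (Fin n) ℝ} (hL : L.PosSemidef)
    (x : Fin n → ℝ) (hLx : L.mulVec x = 0) (hx0 : x ≠ 0) (hxx : x ⬝ᵥ x = (n : ℝ))
    (hlam2 : 0 < sortedEigenvalues hL.isHermitian ⟨1, Nat.lt_of_lt_of_le Nat.one_lt_two hn⟩) :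
    (∀ u : Fin n → ℝ, u ⬝ᵥ L.mulVec u
        ≤ sortedEigenvalues hL.isHermitian ⟨n - 1, Nat.sub_lt (Nat.lt_of_lt_of_le Nat.two_pos hn) Nat.one_pos⟩ * (u ⬝ᵥ u - (x ⬝ᵥ u) ^ 2 / n)) ∧
    (∀ u : Fin n → ℝ,
        sortedEigenvalues hL.isHermitian ⟨1, Nat.lt_of_lt_of_le Nat.one_lt_two hn⟩ * (u ⬝ᵥ u - (x ⬝ᵥ u) ^ 2 / n)
          ≤ u ⬝ᵥ L.mulVec u) := by
  obtain ⟨hmax, hlow⟩ := spectral_quad hn hL x hLx hx0 hlam2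
  have hn0 : (0 : ℝ) < n := by positivity
  have hsymm : L.transpose = L := by
    have h := hL.isHermitian
    ext i j
    have := congrFun (congrFun h i) j
    simpa [Matrix.conjTranspose_apply] using this
  have key : ∀ u : Fin n → ℝ,
      (u - ((x ⬝ᵥ u) / n) • x) ⬝ᵥ x = 0 ∧
      u ⬝ᵥ L.mulVec u = (u - ((x ⬝ᵥ u) / n) • x) ⬝ᵥ L.mulVec (u - ((x ⬝ᵥ u) / n) • x) ∧
      (u - ((x ⬝ᵥ u) / n) • x) ⬝ᵥ (u - ((x ⬝ᵥ u) / n) • x) = u ⬝ᵥ u - (x ⬝ᵥ u) ^ 2 / n := by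
    intro u
    set cc : ℝ := (x ⬝ᵥ u) / n with hcc
    set r : Fin n → ℝ := u - cc • x with hr
    have hxu : x ⬝ᵥ u = u ⬝ᵥ x := dotProduct_comm x u
    have hrx : r ⬝ᵥ x = 0 := by
      rw [hr, sub_dotProduct, smul_dotProduct, smul_eq_mul, hxx, hcc, hxu]
      field_simp
      simp
    refine ⟨hrx, ?_, ?_⟩
    · have hLr : L.mulVec u = L.mulVec r := by
        have : u = r + cc • x := by rw [hr]; ring_nf -- u = (u - cc•x) + cc•x
        conv_lhs => rw [this]
        rw [Matrix.mulVec_add, Matrix.mulVec_smul, hLx]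
        simp
      rw [hLr]
      have husplit : u = r + cc • x := by rw [hr]; ring_nf
      conv_lhs => rw [husplit]
      rw [add_dotProduct, smul_dotProduct, smul_eq_mul]
      have hxLr : x ⬝ᵥ L.mulVec r = 0 := by
        rw [Matrix.dotProduct_mulVec, ← Matrix.mulVec_transpose, hsymm, hLx,
          zero_dotProduct]
      rw [hxLr, mul_zero, add_zero]
    · rw [hr]
      rw [sub_dotProduct, dotProduct_sub, dotProduct_sub,
        smul_dotProduct, smul_dotProduct, dotProduct_smul,
        dotProduct_smul, smul_eq_mul, smul_eq_mul, smul_eq_mul, hxx, hxu,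
        dotProduct_comm u x, hcc]
      field_simp
      rw [smul_eq_mul, div_mul_cancel₀ _ hn0.ne']
      ring
  constructor
  · intro u
    obtain ⟨hrx, hq, hrr⟩ := key u
    rw [hq, ← hrr]
    exact hmax _
  · intro u
    obtain ⟨hrx, hq, hrr⟩ := key u
    rw [hq, ← hrr]
    exact hlow _ hrx

lemma sdot_sum_eq {n p : ℕ} (x : Fin n → ℝ) (S : Matrix (Fin n) (Fin p) ℝ)
    (φ : Fin p → ℝ) (i j : Fin n) :
    (∑ k, Sdot x S φ i k * Sdot x S φ j k)
      = (x i * x j) * ((∑ k, φ k * φ k)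
          - (∑ k, S j k * φ k) * (∑ k, S j k * φ k)
          - (∑ k, S i k * φ k) * (∑ k, S i k * φ k)
          + (∑ k, S i k * φ k) * (∑ k, S j k * φ k) * (∑ k, S i k * S j k)) := by
  have hterm : ∀ k, Sdot x S φ i k * Sdot x S φ j k
      = (x i * x j) * (φ k * φ k)
        - (x i * x j * (∑ l, S j l * φ l)) * (S j k * φ k)
        - (x i * x j * (∑ l, S i l * φ l)) * (S i k * φ k)
        + (x i * x j * (∑ l, S i l * φ l) * (∑ l, S j l * φ l)) * (S i k * S j k) := by
    intro k
    simp only [Sdot]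
    ring
  rw [Finset.sum_congr rfl fun k _ => hterm k]
  rw [Finset.sum_add_distrib, Finset.sum_sub_distrib, Finset.sum_sub_distrib,
    ← Finset.mul_sum, ← Finset.mul_sum, ← Finset.mul_sum, ← Finset.mul_sum]
  ring

lemma bracket_sum {p : ℕ} (a b φ : Fin p → ℝ) (g : ℝ) :
    ∑ k, ∑ l, ((if k = l then (1:ℝ) else 0) - b k * b l - a k * a l + a k * b l * g)
        * (φ k * φ l)
      = (∑ k, φ k * φ k) - (∑ k, b k * φ k) * (∑ k, b k * φ k)
        - (∑ k, a k * φ k) * (∑ k, a k * φ k)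
        + (∑ k, a k * φ k) * (∑ k, b k * φ k) * g := by
  have h1 : ∀ k l : Fin p,
      ((if k = l then (1:ℝ) else 0) - b k * b l - a k * a l + a k * b l * g) * (φ k * φ l)
      = (if k = l then (1:ℝ) else 0) * (φ k * φ l) - (b k * φ k) * (b l * φ l)
        - (a k * φ k) * (a l * φ l) + ((a k * φ k) * (b l * φ l)) * g := by
    intro k l
    split_ifs <;> ring
  simp only [h1]
  simp only [Finset.sum_add_distrib, Finset.sum_sub_distrib]
  have hdiag : ∑ k : Fin p, ∑ l : Fin p, (if k = l then (1:ℝ) else 0) * (φ k * φ l)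
      = ∑ k, φ k * φ k := by
    refine Finset.sum_congr rfl fun k _ => ?_
    rw [Finset.sum_eq_single k]
    · rw [if_pos rfl, one_mul]
    · intro l _ hl
      rw [if_neg (fun h => hl h.symm), zero_mul]
    · intro h
      exact absurd (Finset.mem_univ k) h
  have hb : ∑ k : Fin p, ∑ l : Fin p, b k * φ k * (b l * φ l)
      = (∑ k, b k * φ k) * (∑ k, b k * φ k) := (Finset.sum_mul_sum _ _ _ _).symm
  have ha : ∑ k : Fin p, ∑ l : Fin p, a k * φ k * (a l * φ l)
      = (∑ k, a k * φ k) * (∑ k, a k * φ k) := (Finset.sum_mul_sum _ _ _ _).symm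
  have hd : ∑ k : Fin p, ∑ l : Fin p, a k * φ k * (b l * φ l) * g
      = (∑ k, a k * φ k) * (∑ k, b k * φ k) * g := by
    calc ∑ k : Fin p, ∑ l : Fin p, a k * φ k * (b l * φ l) * g
        = ∑ k : Fin p, (∑ l : Fin p, a k * φ k * (b l * φ l)) * g :=
          Finset.sum_congr rfl fun k _ => (Finset.sum_mul _ _ _).symm
      _ = (∑ k : Fin p, ∑ l : Fin p, a k * φ k * (b l * φ l)) * g := (Finset.sum_mul _ _ _).symm
      _ = (∑ k, a k * φ k) * (∑ k, b k * φ k) * g := by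
          rw [← Finset.sum_mul_sum]
  rw [hdiag, hb, ha, hd]

lemma integrand_eq {n p : ℕ} (x : Fin n → ℝ) (S : Matrix (Fin n) (Fin p) ℝ)
    (c : Fin n → Fin n → ℝ) (φ : Fin p → ℝ) :
    (∑ i, ∑ j, c i j * (∑ k, Sdot x S φ i k * Sdot x S φ j k))
      = ∑ k, ∑ l, (∑ i, ∑ j, c i j * (x i * x j) *
          ((if k = l then (1:ℝ) else 0) - S j k * S j l - S i k * S i l
            + S i k * S j l * (∑ m, S i m * S j m))) * (φ k * φ l) := by
  have hmid : (∑ i, ∑ j, c i j * (∑ k, Sdot x S φ i k * Sdot x S φ j k))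
      = ∑ i, ∑ j, (c i j * (x i * x j)) *
          ((∑ k, φ k * φ k) - (∑ k, S j k * φ k) * (∑ k, S j k * φ k)
            - (∑ k, S i k * φ k) * (∑ k, S i k * φ k)
            + (∑ k, S i k * φ k) * (∑ k, S j k * φ k) * (∑ k, S i k * S j k)) := by
    refine Finset.sum_congr rfl fun i _ => Finset.sum_congr rfl fun j _ => ?_
    rw [sdot_sum_eq x S φ i j]
    ring
  rw [hmid]
  have hswap : ∑ k, ∑ l, (∑ i, ∑ j, c i j * (x i * x j) *
          ((if k = l then (1:ℝ) else 0) - S j k * S j l - S i k * S i l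
            + S i k * S j l * (∑ m, S i m * S j m))) * (φ k * φ l)
      = ∑ i, ∑ j, ∑ k, ∑ l, (c i j * (x i * x j) *
          ((if k = l then (1:ℝ) else 0) - S j k * S j l - S i k * S i l
            + S i k * S j l * (∑ m, S i m * S j m))) * (φ k * φ l) := by
    simp only [Finset.sum_mul]
    rw [Finset.sum_congr rfl fun k (_ : k ∈ Finset.univ) => Finset.sum_comm]
    rw [Finset.sum_comm]
    refine Finset.sum_congr rfl fun i _ => ?_
    rw [Finset.sum_congr rfl fun k (_ : k ∈ Finset.univ) => Finset.sum_comm]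
    rw [Finset.sum_comm]
  rw [hswap]
  refine Finset.sum_congr rfl fun i _ => Finset.sum_congr rfl fun j _ => ?_
  have hpull : ∑ k, ∑ l, (c i j * (x i * x j) *
          ((if k = l then (1:ℝ) else 0) - S j k * S j l - S i k * S i l
            + S i k * S j l * (∑ m, S i m * S j m))) * (φ k * φ l)
      = (c i j * (x i * x j)) * ∑ k, ∑ l,
          ((if k = l then (1:ℝ) else 0) - S j k * S j l - S i k * S i l
            + S i k * S j l * (∑ m, S i m * S j m)) * (φ k * φ l) := by
    rw [Finset.mul_sum]
    refine Finset.sum_congr rfl fun k _ => ?_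
    rw [Finset.mul_sum]
    refine Finset.sum_congr rfl fun l _ => ?_
    ring
  rw [hpull, bracket_sum (fun k => S i k) (fun k => S j k) φ (∑ m, S i m * S j m)]


lemma quad_expand {n : ℕ} (L : Matrix (Fin n) (Fin n) ℝ) (v : Fin n → ℝ) :
    v ⬝ᵥ L.mulVec v = ∑ i, ∑ j, L i j * v i * v j := by
  simp only [dotProduct, Matrix.mulVec]
  refine Finset.sum_congr rfl fun i _ => ?_
  rw [Finset.mul_sum]
  refine Finset.sum_congr rfl fun j _ => ?_
  ring

lemma dot_expand {n : ℕ} (x v : Fin n → ℝ) : x ⬝ᵥ v = ∑ i, x i * v i := rfl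

lemma diag_value {n p : ℕ} (x : Fin n → ℝ) (S : Matrix (Fin n) (Fin p) ℝ)
    (c : Fin n → Fin n → ℝ) (hrows : ∀ i, (∑ k, (S i k) ^ 2) = 1) :
    ∑ k : Fin p, (∑ i, ∑ j, c i j * (x i * x j) *
        ((if k = k then (1:ℝ) else 0) - S j k * S j k - S i k * S i k
          + S i k * S j k * (∑ m, S i m * S j m)))
      = ∑ i, ∑ j, c i j * (x i * x j) * ((p : ℝ) - 2 + (∑ m, S i m * S j m) ^ 2) := by
  have hrows' : ∀ i, (∑ k, S i k * S i k) = 1 := by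
    intro i
    have := hrows i
    simpa [sq] using this
  rw [Finset.sum_comm]
  refine Finset.sum_congr rfl fun i _ => ?_
  rw [Finset.sum_comm]
  refine Finset.sum_congr rfl fun j _ => ?_
  rw [← Finset.mul_sum]
  congr 1
  rw [Finset.sum_add_distrib, Finset.sum_sub_distrib, Finset.sum_sub_distrib,
    Finset.sum_congr rfl fun k (_ : k ∈ Finset.univ) => if_pos rfl,
    Finset.sum_const, Finset.card_univ, Fintype.card_fin, nsmul_eq_mul,
    hrows' i, hrows' j, ← Finset.sum_mul]
  ring

lemma split_value {n p : ℕ} (L : Matrix (Fin n) (Fin n) ℝ) (x : Fin n → ℝ)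
    (S : Matrix (Fin n) (Fin p) ℝ) (hx2 : ∀ i, x i * x i = 1)
    (hrows : ∀ i, (∑ k, (S i k) ^ 2) = 1) (hLx : L.mulVec x = 0) :
    ∑ i, ∑ j, (L i j - if i = j then (L * S * S.transpose) i i else 0) * (x i * x j) *
        ((p : ℝ) - 2 + (∑ k, S i k * S j k) ^ 2)
      = (∑ i, ∑ j, L i j * (x i * x j) * (∑ k, S i k * S j k) ^ 2)
        - ((p : ℝ) - 1) * (∑ i, ∑ j, L i j * (∑ k, S i k * S j k)) := by
  have hrows' : ∀ i, (∑ k, S i k * S i k) = 1 := fun i => by simpa [sq] using hrows i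
  have hLxi : ∀ i, ∑ j, L i j * x j = 0 := fun i => congrFun hLx i
  -- split the subtraction
  have hsplit : ∀ i j, (L i j - if i = j then (L * S * S.transpose) i i else 0) * (x i * x j) *
      ((p : ℝ) - 2 + (∑ k, S i k * S j k) ^ 2)
      = L i j * (x i * x j) * ((p : ℝ) - 2 + (∑ k, S i k * S j k) ^ 2)
        - (if i = j then (L * S * S.transpose) i i else 0) * (x i * x j) *
            ((p : ℝ) - 2 + (∑ k, S i k * S j k) ^ 2) := by
    intro i j; ring
  simp only [hsplit, Finset.sum_sub_distrib]
  -- diagonal part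
  have hdiag : ∑ i, ∑ j, (if i = j then (L * S * S.transpose) i i else 0) * (x i * x j) *
      ((p : ℝ) - 2 + (∑ k, S i k * S j k) ^ 2)
      = ((p : ℝ) - 1) * ∑ i, (L * S * S.transpose) i i := by
    rw [Finset.mul_sum]
    refine Finset.sum_congr rfl fun i _ => ?_
    rw [Finset.sum_eq_single i]
    · rw [if_pos rfl, hx2 i, hrows' i]
      ring
    · intro j _ hj
      rw [if_neg (fun h => hj h.symm)]
      ring
    · intro h
      exact absurd (Finset.mem_univ i) h
  -- trace identity
  have htr : ∑ i, (L * S * S.transpose) i i = ∑ i, ∑ j, L i j * (∑ k, S i k * S j k) := by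
    refine Finset.sum_congr rfl fun i _ => ?_
    rw [Matrix.mul_apply]
    have : ∀ k, (L * S) i k * S.transpose k i = ∑ j, L i j * (S j k * S i k) := by
      intro k
      rw [Matrix.mul_apply, Matrix.transpose_apply, Finset.sum_mul]
      exact Finset.sum_congr rfl fun j _ => by ring
    rw [Finset.sum_congr rfl fun k _ => this k, Finset.sum_comm]
    refine Finset.sum_congr rfl fun j _ => ?_
    rw [← Finset.mul_sum]
    congr 1
    exact Finset.sum_congr rfl fun k _ => by ring
  -- off-diagonal part: expand (p-2+g²)
  have hoff : ∑ i, ∑ j, L i j * (x i * x j) * ((p : ℝ) - 2 + (∑ k, S i k * S j k) ^ 2)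
      = ((p : ℝ) - 2) * (∑ i, x i * ∑ j, L i j * x j)
        + ∑ i, ∑ j, L i j * (x i * x j) * (∑ k, S i k * S j k) ^ 2 := by
    rw [Finset.mul_sum, ← Finset.sum_add_distrib]
    refine Finset.sum_congr rfl fun i _ => ?_
    rw [Finset.mul_sum, Finset.mul_sum, ← Finset.sum_add_distrib]
    refine Finset.sum_congr rfl fun j _ => ?_
    ring
  rw [hdiag, htr, hoff]
  have : ∑ i, x i * ∑ j, L i j * x j = 0 := by
    refine Finset.sum_eq_zero fun i _ => ?_
    rw [hLxi i, mul_zero]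
  rw [this]
  ring

lemma QB_eq {n p : ℕ} (L : Matrix (Fin n) (Fin n) ℝ) (S : Matrix (Fin n) (Fin p) ℝ) :
    ∑ k : Fin p, ((fun i => S i k) ⬝ᵥ L.mulVec (fun i => S i k))
      = ∑ i, ∑ j, L i j * (∑ k, S i k * S j k) := by
  have h : ∀ k : Fin p, ((fun i => S i k) ⬝ᵥ L.mulVec (fun i => S i k))
      = ∑ i, ∑ j, L i j * S i k * S j k := fun k => quad_expand L _
  rw [Finset.sum_congr rfl fun k _ => h k, Finset.sum_comm]
  refine Finset.sum_congr rfl fun i _ => ?_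
  rw [Finset.sum_comm]
  refine Finset.sum_congr rfl fun j _ => ?_
  rw [Finset.sum_congr rfl fun k (_ : k ∈ Finset.univ) => mul_assoc (L i j) (S i k) (S j k),
    ← Finset.mul_sum]

lemma QA_eq {n p : ℕ} (L : Matrix (Fin n) (Fin n) ℝ) (x : Fin n → ℝ)
    (S : Matrix (Fin n) (Fin p) ℝ) :
    ∑ k : Fin p, ∑ l : Fin p, ((fun i => x i * S i k * S i l) ⬝ᵥ
        L.mulVec (fun i => x i * S i k * S i l))
      = ∑ i, ∑ j, L i j * (x i * x j) * (∑ k, S i k * S j k) ^ 2 := by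
  have h : ∀ k l : Fin p, ((fun i => x i * S i k * S i l) ⬝ᵥ
      L.mulVec (fun i => x i * S i k * S i l))
      = ∑ i, ∑ j, L i j * (x i * S i k * S i l) * (x j * S j k * S j l) :=
    fun k l => quad_expand L _
  rw [Finset.sum_congr rfl fun k _ => Finset.sum_congr rfl fun l _ => h k l]
  -- now reorder sums: k l i j → i j k l
  rw [Finset.sum_congr rfl fun k (_ : k ∈ Finset.univ) => Finset.sum_comm]
  rw [Finset.sum_comm]
  refine Finset.sum_congr rfl fun i _ => ?_
  rw [Finset.sum_congr rfl fun k (_ : k ∈ Finset.univ) => Finset.sum_comm]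
  rw [Finset.sum_comm]
  refine Finset.sum_congr rfl fun j _ => ?_
  -- per (i,j): ∑ k ∑ l  L i j * (...) = L i j * xx * g²
  have : ∀ k l : Fin p, L i j * (x i * S i k * S i l) * (x j * S j k * S j l)
      = (L i j * (x i * x j)) * ((S i k * S j k) * (S i l * S j l)) := by
    intro k l; ring
  rw [Finset.sum_congr rfl fun k (_ : k ∈ Finset.univ) =>
    Finset.sum_congr rfl fun l (_ : l ∈ Finset.univ) => this k l]
  rw [Finset.sum_congr rfl fun k (_ : k ∈ Finset.univ) => (Finset.mul_sum _ _ _).symm]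
  rw [← Finset.mul_sum, ← Finset.sum_mul_sum]
  ring


lemma dot_expand' {n : ℕ} (x v : Fin n → ℝ) : x ⬝ᵥ v = ∑ i, x i * v i := rfl

section AuxB
variable {n p : ℕ} (L : Matrix (Fin n) (Fin n) ℝ) (x : Fin n → ℝ) (S : Matrix (Fin n) (Fin p) ℝ)

lemma colA_eq (hrows : ∀ i, (∑ k, (S i k) ^ 2) = 1) :
    ∑ k : Fin p, ((fun i => S i k) ⬝ᵥ (fun i => S i k)) = (n : ℝ) := by
  simp only [dot_expand']
  rw [Finset.sum_comm]
  have hrows' : ∀ i, (∑ k, S i k * S i k) = 1 := fun i => by simpa [sq] using hrows i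
  rw [Finset.sum_congr rfl fun i (_ : i ∈ Finset.univ) => hrows' i]
  simp

lemma colB_eq :
    ∑ k : Fin p, (x ⬝ᵥ (fun i => S i k)) ^ 2
      = ∑ i, ∑ j, x i * x j * (∑ k, S i k * S j k) := by
  simp only [dot_expand']
  have h : ∀ k : Fin p, (∑ i, x i * S i k) ^ 2
      = ∑ i, ∑ j, (x i * S i k) * (x j * S j k) := by
    intro k
    rw [sq, Finset.sum_mul_sum]
  rw [Finset.sum_congr rfl fun k _ => h k]
  rw [Finset.sum_congr rfl fun k (_ : k ∈ Finset.univ) => Finset.sum_comm]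
  rw [Finset.sum_comm]
  refine Finset.sum_congr rfl fun i _ => ?_
  rw [Finset.sum_comm]
  refine Finset.sum_congr rfl fun j _ => ?_
  rw [show (fun k : Fin p => x j * S j k * (x i * S i k))
      = fun k => (x i * x j) * (S i k * S j k) from funext fun k => by ring]
  rw [← Finset.mul_sum]

lemma wA_eq (hx2 : ∀ i, x i * x i = 1) (hrows : ∀ i, (∑ k, (S i k) ^ 2) = 1) :
    ∑ k : Fin p, ∑ l : Fin p, ((fun i => x i * S i k * S i l) ⬝ᵥ (fun i => x i * S i k * S i l))
      = (n : ℝ) := by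
  simp only [dot_expand']
  have hrows' : ∀ i, (∑ k, S i k * S i k) = 1 := fun i => by simpa [sq] using hrows i
  rw [Finset.sum_congr rfl fun k (_ : k ∈ Finset.univ) => Finset.sum_comm]
  rw [Finset.sum_comm]
  have hper : ∀ i : Fin n, ∑ k : Fin p, ∑ l : Fin p,
      (x i * S i k * S i l) * (x i * S i k * S i l) = 1 := by
    intro i
    have h1 : ∀ k l : Fin p, (x i * S i k * S i l) * (x i * S i k * S i l)
        = (x i * x i) * ((S i k * S i k) * (S i l * S i l)) := fun k l => by ring
    rw [Finset.sum_congr rfl fun k (_ : k ∈ Finset.univ) =>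
      Finset.sum_congr rfl fun l (_ : l ∈ Finset.univ) => h1 k l]
    simp only [hx2 i, one_mul]
    rw [Finset.sum_congr rfl fun k (_ : k ∈ Finset.univ) => (Finset.mul_sum _ _ _).symm,
      ← Finset.sum_mul, hrows' i]
    norm_num
  rw [Finset.sum_congr rfl fun i (_ : i ∈ Finset.univ) => hper i]
  simp

lemma wB_eq (hx2 : ∀ i, x i * x i = 1) :
    ∑ k : Fin p, ∑ l : Fin p, (x ⬝ᵥ (fun i => x i * S i k * S i l)) ^ 2
      = ∑ i, ∑ j, (∑ k, S i k * S j k) ^ 2 := by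
  simp only [dot_expand']
  have hx : ∀ k l : Fin p, (∑ i, x i * (x i * S i k * S i l)) = ∑ i, S i k * S i l := by
    intro k l
    refine Finset.sum_congr rfl fun i _ => ?_
    rw [show x i * (x i * S i k * S i l) = (x i * x i) * (S i k * S i l) from by ring,
      hx2 i, one_mul]
  rw [Finset.sum_congr rfl fun k (_ : k ∈ Finset.univ) =>
    Finset.sum_congr rfl fun l (_ : l ∈ Finset.univ) => congrArg (· ^ 2) (hx k l)]
  have hsq : ∀ k l : Fin p, (∑ i, S i k * S i l) ^ 2
      = ∑ i, ∑ j, (S i k * S i l) * (S j k * S j l) := by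
    intro k l
    rw [sq, Finset.sum_mul_sum]
  rw [Finset.sum_congr rfl fun k (_ : k ∈ Finset.univ) =>
    Finset.sum_congr rfl fun l (_ : l ∈ Finset.univ) => hsq k l]
  rw [Finset.sum_congr rfl fun k (_ : k ∈ Finset.univ) => Finset.sum_comm]
  rw [Finset.sum_comm]
  refine Finset.sum_congr rfl fun i _ => ?_
  rw [Finset.sum_congr rfl fun k (_ : k ∈ Finset.univ) => Finset.sum_comm]
  rw [Finset.sum_comm]
  refine Finset.sum_congr rfl fun j _ => ?_
  have h2 : ∀ k l : Fin p, (S i k * S i l) * (S j k * S j l)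
      = (S i k * S j k) * (S i l * S j l) := fun k l => by ring
  rw [Finset.sum_congr rfl fun k (_ : k ∈ Finset.univ) =>
    Finset.sum_congr rfl fun l (_ : l ∈ Finset.univ) => h2 k l]
  rw [Finset.sum_congr rfl fun k (_ : k ∈ Finset.univ) => (Finset.mul_sum _ _ _).symm,
    ← Finset.sum_mul, ← sq]

lemma T_le (hn0 : (0:ℝ) < n) (hx2 : ∀ i, x i * x i = 1)
    (hrows : ∀ i, (∑ k, (S i k) ^ 2) = 1) :
    ∑ i, ∑ j, x i * x j * (∑ k, S i k * S j k) ≤ (n : ℝ) ^ 2 := by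
  rw [← colB_eq x S]
  have hcs : ∀ k : Fin p, (x ⬝ᵥ (fun i => S i k)) ^ 2 ≤ (n : ℝ) * ∑ i, (S i k) ^ 2 := by
    intro k
    rw [dot_expand']
    have := Finset.sum_mul_sq_le_sq_mul_sq Finset.univ x (fun i => S i k)
    have hxsq : ∑ i, x i ^ 2 = (n : ℝ) := by
      rw [Finset.sum_congr rfl fun i (_ : i ∈ Finset.univ) => by rw [sq, hx2 i]]
      simp
    calc (∑ i, x i * S i k) ^ 2 ≤ (∑ i, x i ^ 2) * ∑ i, (S i k) ^ 2 := this
      _ = (n : ℝ) * ∑ i, (S i k) ^ 2 := by rw [hxsq]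
  calc ∑ k : Fin p, (x ⬝ᵥ (fun i => S i k)) ^ 2
      ≤ ∑ k : Fin p, (n : ℝ) * ∑ i, (S i k) ^ 2 := Finset.sum_le_sum fun k _ => hcs k
    _ = (n : ℝ) * ∑ k : Fin p, ∑ i, (S i k) ^ 2 := by rw [Finset.mul_sum]
    _ = (n : ℝ) * ∑ i, ∑ k : Fin p, (S i k) ^ 2 := by rw [Finset.sum_comm]
    _ = (n : ℝ) ^ 2 := by
        rw [Finset.sum_congr rfl fun i (_ : i ∈ Finset.univ) => hrows i]
        simp [sq]

lemma E_eq (hx2 : ∀ i, x i * x i = 1) :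
    ∑ i, ∑ j, (1 - x i * x j * (∑ k, S i k * S j k)) ^ 2
      = (n : ℝ) ^ 2 - 2 * (∑ i, ∑ j, x i * x j * (∑ k, S i k * S j k))
        + ∑ i, ∑ j, (∑ k, S i k * S j k) ^ 2 := by
  have hper : ∀ i j : Fin n, (1 - x i * x j * (∑ k, S i k * S j k)) ^ 2
      = 1 - 2 * (x i * x j * (∑ k, S i k * S j k)) + (∑ k, S i k * S j k) ^ 2 := by
    intro i j
    have hi := hx2 i
    have hj := hx2 j
    linear_combination ((∑ k, S i k * S j k) ^ 2 * (x j * x j)) * hi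
      + (∑ k, S i k * S j k) ^ 2 * hj
  rw [Finset.sum_congr rfl fun i (_ : i ∈ Finset.univ) =>
    Finset.sum_congr rfl fun j (_ : j ∈ Finset.univ) => hper i j]
  simp only [Finset.sum_add_distrib, Finset.sum_sub_distrib, ← Finset.mul_sum]
  simp [sq]


lemma arith1 {nn t f : ℝ} (hn0 : 0 < nn) (hE0 : 0 ≤ nn ^ 2 - 2 * t + f)
    (h5 : nn * (2 * (nn - nn⁻¹ * t) - (nn - nn⁻¹ * f)) = nn ^ 2 - 2 * t + f) :
    0 ≤ 2 * (nn - nn⁻¹ * t) - (nn - nn⁻¹ * f) := by nlinarith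

lemma arith2 {a s : ℝ} (hle : a * s ≤ 0) (hge : 0 ≤ s) (ha : 0 < a) : s = 0 := by nlinarith

lemma arith3 {qa qb lam2 lamM t f pp : ℝ} (hsocp : 0 ≤ qa - pp * qb) (hQA : qa ≤ lamM * f)
    (m1 : pp * (lam2 * t) ≤ pp * qb) (m3 : 2 * lamM * t ≤ (pp * lam2) * t) :
    lamM * (2 * t - f) ≤ 0 := by nlinarith

lemma arith4 {qa qb lam2 lamM t f pp : ℝ} (hQA : qa ≤ lamM * f) (m1 : pp * (lam2 * t) ≤ pp * qb)
    (m2 : lamM * f ≤ lamM * (2 * t)) : qa - pp * qb ≤ (2 * lamM - pp * lam2) * t := by nlinarith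

lemma arith5 {nn T : ℝ} (hT : T ≤ nn ^ 2) (hn0 : 0 < nn) (h8 : nn * (nn - nn⁻¹ * T) = nn ^ 2 - T) :
    0 ≤ nn - nn⁻¹ * T := by nlinarith

/-- The `d = 1` landscape theorem: if `L ⪰ 0`, `L x = 0` with `x ∈ {±1}ⁿ`,
`λ₂(L) > 0` and `p ≥ 2 λ_max(L)/λ₂(L) + 1`, then for `S` with unit rows,
`X_{ij} = x_i x_j ⟨s_i, s_j⟩`, and the second-order condition
`E_Φ ⟨L − Diag(L S Sᵀ), Ṡ Ṡᵀ⟩ ≥ 0`, the averaged quadratic form is bounded by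
`(2 λ_max(L) − (p−1) λ₂(L))(n − n⁻¹ ⟨X, J⟩)`, which forces `⟨X, J⟩ = n²`
and hence `S Sᵀ = x xᵀ`. -/
theorem landscape_d_one (n p : ℕ) (hn : 2 ≤ n)
    (L : Matrix (Fin n) (Fin n) ℝ) (hL : L.PosSemidef)
    (x : Fin n → ℝ) (hx : ∀ i, x i = 1 ∨ x i = -1)
    (hLx : L.mulVec x = 0)
    (hlam2 : 0 < sortedEigenvalues hL.isHermitian ⟨1, by omega⟩)
    (hp : (p : ℝ) ≥ 2 * sortedEigenvalues hL.isHermitian ⟨n - 1, by omega⟩ /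
        sortedEigenvalues hL.isHermitian ⟨1, by omega⟩ + 1)
    (S : Matrix (Fin n) (Fin p) ℝ) (hrows : ∀ i, (∑ k, (S i k) ^ 2) = 1)
    (hsocp : 0 ≤ ∫ φ : Fin p → ℝ,
        (∑ i, ∑ j,
          (L i j - if i = j then (L * S * S.transpose) i i else 0) *
            (∑ k, Sdot x S φ i k * Sdot x S φ j k))
        ∂(Measure.pi fun _ : Fin p => gaussianReal 0 1)) :
    (∫ φ : Fin p → ℝ,
        (∑ i, ∑ j,
          (L i j - if i = j then (L * S * S.transpose) i i else 0) *
            (∑ k, Sdot x S φ i k * Sdot x S φ j k))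
        ∂(Measure.pi fun _ : Fin p => gaussianReal 0 1)) ≤
      (2 * sortedEigenvalues hL.isHermitian ⟨n - 1, by omega⟩ -
          ((p : ℝ) - 1) * sortedEigenvalues hL.isHermitian ⟨1, by omega⟩) *
        ((n : ℝ) - (n : ℝ)⁻¹ * ∑ i, ∑ j, x i * x j * (∑ k, S i k * S j k)) ∧
    (∑ i, ∑ j, x i * x j * (∑ k, S i k * S j k)) = (n : ℝ) ^ 2 ∧
    ∀ i j, (∑ k, S i k * S j k) = x i * x j := by
  have hn0 : (0 : ℝ) < n := by positivity
  have hx2 : ∀ i, x i * x i = 1 := by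
    intro i; rcases hx i with h | h <;> rw [h] <;> norm_num
  have hx0 : x ≠ 0 := by
    intro h
    have h0 : x ⟨0, by omega⟩ = 0 := by rw [h]; rfl
    rcases hx ⟨0, by omega⟩ with h1 | h1 <;> rw [h1] at h0 <;> norm_num at h0
  have hxx : x ⬝ᵥ x = (n : ℝ) := by
    rw [dot_expand', Finset.sum_congr rfl fun i (_ : i ∈ Finset.univ) => hx2 i]
    simp
  obtain ⟨hup, hlo⟩ := quad_bounds hn hL x hLx hx0 hxx hlam2
  have hintgr : (∫ φ : Fin p → ℝ, (∑ i, ∑ j,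
      (L i j - if i = j then (L * S * S.transpose) i i else 0) *
        (∑ k, Sdot x S φ i k * Sdot x S φ j k))
      ∂(Measure.pi fun _ : Fin p => gaussianReal 0 1))
      = ∑ i, ∑ j, (L i j - if i = j then (L * S * S.transpose) i i else 0) * (x i * x j) *
          ((p : ℝ) - 2 + (∑ k, S i k * S j k) ^ 2) := by
    have hfun : (fun φ : Fin p → ℝ => (∑ i, ∑ j,
        (L i j - if i = j then (L * S * S.transpose) i i else 0) *
          (∑ k, Sdot x S φ i k * Sdot x S φ j k)))
        = fun φ => ∑ k, ∑ l, (∑ i, ∑ j,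
            (L i j - if i = j then (L * S * S.transpose) i i else 0) * (x i * x j) *
            ((if k = l then (1:ℝ) else 0) - S j k * S j l - S i k * S i l
              + S i k * S j l * (∑ m, S i m * S j m))) * (φ k * φ l) :=
      funext fun φ => integrand_eq x S _ φ
    rw [hfun, integral_quadform]
    exact diag_value x S _ hrows
  rw [hintgr, split_value L x S hx2 hrows hLx] at hsocp ⊢
  set lam2 := sortedEigenvalues hL.isHermitian ⟨1, by omega⟩ with hlam2def
  set lamM := sortedEigenvalues hL.isHermitian ⟨n - 1, by omega⟩ with hlamMdef
  have hmono := Tuple.monotone_sort hL.isHermitian.eigenvalues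
  have hle : lam2 ≤ lamM := by
    rw [hlam2def, hlamMdef]
    exact hmono (by rw [Fin.mk_le_mk]; omega)
  have hlamM0 : (0 : ℝ) ≤ lamM := le_trans hlam2.le hle
  have hlamMpos : (0 : ℝ) < lamM := lt_of_lt_of_le hlam2 hle
  have hp1 : (0 : ℝ) ≤ (p : ℝ) - 1 := by
    have hd : (0 : ℝ) ≤ 2 * lamM / lam2 := by positivity
    linarith [hp]
  have hpb : 2 * lamM ≤ ((p : ℝ) - 1) * lam2 := by
    have h := (div_le_iff₀ hlam2).mp (by linarith [hp] : 2 * lamM / lam2 ≤ (p : ℝ) - 1)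
    linarith
  have hQB : lam2 * ((n : ℝ) - (n : ℝ)⁻¹ * ∑ i, ∑ j, x i * x j * (∑ k, S i k * S j k))
      ≤ ∑ i, ∑ j, L i j * (∑ k, S i k * S j k) := by
    calc lam2 * ((n : ℝ) - (n : ℝ)⁻¹ * ∑ i, ∑ j, x i * x j * (∑ k, S i k * S j k))
        = ∑ k : Fin p, lam2 * (((fun i => S i k) ⬝ᵥ (fun i => S i k))
            - (x ⬝ᵥ (fun i => S i k)) ^ 2 / n) := by
          rw [← Finset.mul_sum]
          congr 1
          rw [Finset.sum_sub_distrib, ← Finset.sum_div, colA_eq S hrows, colB_eq x S]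
          ring
      _ ≤ ∑ k : Fin p, ((fun i => S i k) ⬝ᵥ L.mulVec (fun i => S i k)) :=
          Finset.sum_le_sum fun k _ => hlo _
      _ = _ := QB_eq L S
  have hQA : (∑ i, ∑ j, L i j * (x i * x j) * (∑ k, S i k * S j k) ^ 2)
      ≤ lamM * ((n : ℝ) - (n : ℝ)⁻¹ * ∑ i, ∑ j, (∑ k, S i k * S j k) ^ 2) := by
    calc (∑ i, ∑ j, L i j * (x i * x j) * (∑ k, S i k * S j k) ^ 2)
        = ∑ k : Fin p, ∑ l : Fin p, ((fun i => x i * S i k * S i l) ⬝ᵥ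
            L.mulVec (fun i => x i * S i k * S i l)) := (QA_eq L x S).symm
      _ ≤ ∑ k : Fin p, ∑ l : Fin p, lamM * (((fun i => x i * S i k * S i l) ⬝ᵥ
            (fun i => x i * S i k * S i l)) - (x ⬝ᵥ (fun i => x i * S i k * S i l)) ^ 2 / n) :=
          Finset.sum_le_sum fun k _ => Finset.sum_le_sum fun l _ => hup _
      _ = lamM * ((n : ℝ) - (n : ℝ)⁻¹ * ∑ i, ∑ j, (∑ k, S i k * S j k) ^ 2) := by
          rw [Finset.sum_congr rfl fun k (_ : k ∈ Finset.univ) => (Finset.mul_sum _ _ _).symm,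
            ← Finset.mul_sum]
          congr 1
          rw [Finset.sum_congr rfl fun k (_ : k ∈ Finset.univ) => Finset.sum_sub_distrib _ _,
            Finset.sum_sub_distrib,
            Finset.sum_congr rfl fun k (_ : k ∈ Finset.univ) => (Finset.sum_div _ _ _).symm,
            ← Finset.sum_div, wA_eq x S hx2 hrows, wB_eq x S hx2]
          ring
  have hT := T_le x S hn0 hx2 hrows
  have hE0 : (0 : ℝ) ≤ (n : ℝ) ^ 2 - 2 * (∑ i, ∑ j, x i * x j * (∑ k, S i k * S j k))
      + ∑ i, ∑ j, (∑ k, S i k * S j k) ^ 2 := by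
    rw [← E_eq x S hx2]
    exact Finset.sum_nonneg fun i _ => Finset.sum_nonneg fun j _ => sq_nonneg _
  have ht0 : (0 : ℝ) ≤ (n : ℝ) - (n : ℝ)⁻¹ * ∑ i, ∑ j, x i * x j * (∑ k, S i k * S j k) := by
    have h8 : (n : ℝ) * ((n : ℝ) - (n : ℝ)⁻¹ * ∑ i, ∑ j, x i * x j * (∑ k, S i k * S j k))
        = (n : ℝ) ^ 2 - ∑ i, ∑ j, x i * x j * (∑ k, S i k * S j k) := by
      field_simp
    exact arith5 hT hn0 h8
  have h2tf : (n : ℝ) - (n : ℝ)⁻¹ * ∑ i, ∑ j, (∑ k, S i k * S j k) ^ 2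
      ≤ 2 * ((n : ℝ) - (n : ℝ)⁻¹ * ∑ i, ∑ j, x i * x j * (∑ k, S i k * S j k)) := by
    have h5 : (n : ℝ) * ((n : ℝ) - (n : ℝ)⁻¹ * ∑ i, ∑ j, (∑ k, S i k * S j k) ^ 2)
        = (n : ℝ) ^ 2 - ∑ i, ∑ j, (∑ k, S i k * S j k) ^ 2 := by
      field_simp
    have h6 : (n : ℝ) * (2 * ((n : ℝ) - (n : ℝ)⁻¹ *
          ∑ i, ∑ j, x i * x j * (∑ k, S i k * S j k)))
        = 2 * (n : ℝ) ^ 2 - 2 * ∑ i, ∑ j, x i * x j * (∑ k, S i k * S j k) := by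
      field_simp
    refine (mul_le_mul_iff_right₀ hn0).mp ?_
    rw [h5, h6]
    linarith [hE0]
  have m1 : ((p : ℝ) - 1) * (lam2 * ((n : ℝ) - (n : ℝ)⁻¹ *
        ∑ i, ∑ j, x i * x j * (∑ k, S i k * S j k)))
      ≤ ((p : ℝ) - 1) * ∑ i, ∑ j, L i j * (∑ k, S i k * S j k) :=
    mul_le_mul_of_nonneg_left hQB hp1
  have m2 : lamM * ((n : ℝ) - (n : ℝ)⁻¹ * ∑ i, ∑ j, (∑ k, S i k * S j k) ^ 2)
      ≤ lamM * (2 * ((n : ℝ) - (n : ℝ)⁻¹ * ∑ i, ∑ j, x i * x j * (∑ k, S i k * S j k))) :=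
    mul_le_mul_of_nonneg_left h2tf hlamM0
  have m3 : 2 * lamM * ((n : ℝ) - (n : ℝ)⁻¹ * ∑ i, ∑ j, x i * x j * (∑ k, S i k * S j k))
      ≤ (((p : ℝ) - 1) * lam2) * ((n : ℝ) - (n : ℝ)⁻¹ *
        ∑ i, ∑ j, x i * x j * (∑ k, S i k * S j k)) :=
    mul_le_mul_of_nonneg_right hpb ht0
  -- equality case
  have hfeq : 2 * ((n : ℝ) - (n : ℝ)⁻¹ * ∑ i, ∑ j, x i * x j * (∑ k, S i k * S j k))
      - ((n : ℝ) - (n : ℝ)⁻¹ * ∑ i, ∑ j, (∑ k, S i k * S j k) ^ 2) = 0 := by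
    have hleq : lamM * (2 * ((n : ℝ) - (n : ℝ)⁻¹ *
          ∑ i, ∑ j, x i * x j * (∑ k, S i k * S j k))
        - ((n : ℝ) - (n : ℝ)⁻¹ * ∑ i, ∑ j, (∑ k, S i k * S j k) ^ 2)) ≤ 0 := by
      exact arith3 hsocp hQA m1 m3
    have hgeq : (0 : ℝ) ≤ 2 * ((n : ℝ) - (n : ℝ)⁻¹ *
          ∑ i, ∑ j, x i * x j * (∑ k, S i k * S j k))
        - ((n : ℝ) - (n : ℝ)⁻¹ * ∑ i, ∑ j, (∑ k, S i k * S j k) ^ 2) := by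
      have h5 : (n : ℝ) * (2 * ((n : ℝ) - (n : ℝ)⁻¹ *
            ∑ i, ∑ j, x i * x j * (∑ k, S i k * S j k))
          - ((n : ℝ) - (n : ℝ)⁻¹ * ∑ i, ∑ j, (∑ k, S i k * S j k) ^ 2))
          = (n : ℝ) ^ 2 - 2 * (∑ i, ∑ j, x i * x j * (∑ k, S i k * S j k))
            + ∑ i, ∑ j, (∑ k, S i k * S j k) ^ 2 := by
        field_simp
        ring
      exact arith1 hn0 hE0 h5
    exact arith2 hleq hgeq hlamMpos
  have hEzero : (n : ℝ) ^ 2 - 2 * (∑ i, ∑ j, x i * x j * (∑ k, S i k * S j k))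
      + ∑ i, ∑ j, (∑ k, S i k * S j k) ^ 2 = 0 := by
    have h5 : (n : ℝ) * (2 * ((n : ℝ) - (n : ℝ)⁻¹ *
          ∑ i, ∑ j, x i * x j * (∑ k, S i k * S j k))
        - ((n : ℝ) - (n : ℝ)⁻¹ * ∑ i, ∑ j, (∑ k, S i k * S j k) ^ 2))
        = (n : ℝ) ^ 2 - 2 * (∑ i, ∑ j, x i * x j * (∑ k, S i k * S j k))
          + ∑ i, ∑ j, (∑ k, S i k * S j k) ^ 2 := by
      field_simp
      ring
    rw [← h5, hfeq, mul_zero]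
  have hterm : ∀ i j, x i * x j * (∑ k, S i k * S j k) = 1 := by
    have hsum0 : ∑ i, ∑ j, (1 - x i * x j * (∑ k, S i k * S j k)) ^ 2 = 0 := by
      rw [E_eq x S hx2]
      exact hEzero
    intro i j
    have h1 := (Finset.sum_eq_zero_iff_of_nonneg
      (fun i (_ : i ∈ Finset.univ) =>
        Finset.sum_nonneg fun j _ => sq_nonneg _)).mp hsum0 i (Finset.mem_univ i)
    have h2 := (Finset.sum_eq_zero_iff_of_nonneg
      (fun j (_ : j ∈ Finset.univ) => sq_nonneg _)).mp h1 j (Finset.mem_univ j)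
    have h3 : 1 - x i * x j * (∑ k, S i k * S j k) = 0 := by
      exact pow_eq_zero_iff (by norm_num) |>.mp h2
    linarith
  have hTval : (∑ i, ∑ j, x i * x j * (∑ k, S i k * S j k)) = (n : ℝ) ^ 2 := by
    rw [Finset.sum_congr rfl fun i (_ : i ∈ Finset.univ) =>
      Finset.sum_congr rfl fun j (_ : j ∈ Finset.univ) => hterm i j]
    simp [sq]
  refine ⟨?_, hTval, ?_⟩
  · exact arith4 hQA m1 m2
  · intro i j
    have h := hterm i j
    have hi := hx2 i
    have hj := hx2 j
    linear_combination (x i * x j) * h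
      - ((∑ k, S i k * S j k) * (x j * x j)) * hi
      - (∑ k, S i k * S j k) * hj
end AuxB
end
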